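/- arXiv:2010.02955 — 12 statements merged into one kernel-verified Lean document; each statement's English description precedes it below -/
import Mathlib

section
/- Let (X,d) be a metric space, A ⊆ X a nonempty closed set, and φ : A → [0,κ] a bounded nonnegative function with bound κ > 0. Define f : X → ℝ by f(p) = inf_{a∈A} [φ(a)·d(p,A) + d(a,p)]. Then f is (κ+1)-Lipschitz on X. -/
open Metric Set

/-- Pasch–Hausdorff-type construction: for a bounded nonnegative `φ` on a nonempty
closed set `A`, the function `f p = inf_{a ∈ A} (φ a * d(p,A) + d(a,p))` is
`(κ+1)`-Lipschitz. -/
theorem stmt_0 {X : Type*} [MetricSpace X] (A : Set X) (hA : A.Nonempty)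
    (hAc : IsClosed A) (φ : X → ℝ) (κ : ℝ) (hκ : 0 < κ)
    (hφ : ∀ a ∈ A, 0 ≤ φ a ∧ φ a ≤ κ)
    (f : X → ℝ)
    (hf : ∀ p : X, f p = ⨅ a : A, (φ a * Metric.infDist p A + dist (a : X) p)) :
    ∀ x p : X, |f x - f p| ≤ (κ + 1) * dist x p := by
  have hne : Nonempty A := hA.to_subtype
  have hbdd : ∀ q : X, BddBelow (Set.range fun a : A => φ a * infDist q A + dist (a : X) q) := by
    intro q
    refine ⟨0, ?_⟩
    rintro _ ⟨a, rfl⟩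
    have h1 := (hφ a a.2).1
    exact add_nonneg (mul_nonneg h1 Metric.infDist_nonneg) dist_nonneg
  have key : ∀ x p : X, f x ≤ f p + (κ + 1) * dist x p := by
    intro x p
    rw [hf p]
    have : f x - (κ + 1) * dist x p ≤ ⨅ a : A, (φ a * infDist p A + dist (a : X) p) := by
      apply le_ciInf
      intro a
      have h1 : f x ≤ φ a * infDist x A + dist (a : X) x := by
        rw [hf x]; exact ciInf_le (hbdd x) a
      have h2 : infDist x A ≤ infDist p A + dist x p := infDist_le_infDist_add_dist
      have h3 : dist (a : X) x ≤ dist (a : X) p + dist p x := dist_triangle _ _ _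
      have h4 : φ a * infDist x A ≤ φ a * infDist p A + κ * dist x p := by
        calc φ a * infDist x A ≤ φ a * (infDist p A + dist x p) :=
              mul_le_mul_of_nonneg_left h2 (hφ a a.2).1
          _ = φ a * infDist p A + φ a * dist x p := by ring
          _ ≤ φ a * infDist p A + κ * dist x p := by
              gcongr
              · exact (hφ a a.2).2
        
      have := dist_comm p x
      linarith
    linarith
  intro x p
  rw [abs_sub_le_iff]
  constructor
  · linarith [key x p]
  · have := key p x
    rw [dist_comm p x] at this
    linarith
end

section
/- Let (X,d) be a metric space, A ⊆ X a nonempty closed set, and φ : A → ℝ a bounded continuous function. Define Ψ[φ] : X → ℝ by Ψ[φ](a) = φ(a) for a ∈ A and Ψ[φ](p) = inf_{a∈A} [φ(a) + d(a,p)/d(p,A) − 1] for p ∈ X\A. Then Ψ[φ] is continuous on X. -/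
/-!
Off `A`, multiplying through by `infDist p A > 0` writes `Ψ[φ](p) = F(p) / infDist p A - 1`, where
`F(p) = inf_a (φ a * infDist p A + dist a p)` is an infimum of uniformly Lipschitz functions, hence
continuous. At `x ∈ A` we have `infDist q A ≤ dist q x → 0`: every term is at least `φ a` (since
`dist a q ≥ infDist q A`) and blows up unless `a` is near `x`, while a point `b ∈ A` nearly
realising `infDist q A` is near `x` and its term is close to `φ b`. Both bounds tend to `φ x`.
-/

open Metric Set Filter Topology

theorem LipschitzWith.ciInf {ι α : Type*} [Nonempty ι] [PseudoMetricSpace α] {K : NNReal}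
    {g : ι → α → ℝ} (hg : ∀ i, LipschitzWith K (g i)) (hb : ∀ x, BddBelow (range (g · x))) :
    LipschitzWith K fun x => ⨅ i, g i x :=
  LipschitzWith.of_le_add_mul K fun x y => sub_le_iff_le_add.1 <| le_ciInf fun i =>
    sub_le_iff_le_add.2 <| (ciInf_le (hb x) i).trans ((hg i).le_add_mul x y)

lemma eventually_dist_mul_lt {X : Type*} [PseudoMetricSpace X] (x : X) (K : ℝ) {ρ : ℝ}
    (hρ : 0 < ρ) : ∀ᶠ q in 𝓝 x, dist q x * K < ρ :=
  (((continuous_id.dist continuous_const).mul continuous_const).tendsto' x 0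
    (by simp)).eventually (gt_mem_nhds hρ)

section HausdorffExtension

variable {X : Type*} [PseudoMetricSpace X] {A : Set X} {φ : X → ℝ} {c : ℝ}

/-- `Ψ[φ]` off `A`. On `A` the quotient takes the junk value `dist a p / 0 = 0`, so there this is
not `φ`. -/
noncomputable def hausdorffExtension (A : Set X) (φ : X → ℝ) (p : X) : ℝ :=
  ⨅ a : A, (φ a + dist (a : X) p / infDist p A - 1)

lemma bddBelow_hausdorffExtension_terms (hφ : ∀ a ∈ A, c ≤ φ a) (p : X) :
    BddBelow (range fun a : A => φ a + dist (a : X) p / infDist p A - 1) := by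
  refine ⟨c - 1, forall_mem_range.2 fun a => ?_⟩
  have : 0 ≤ dist (a : X) p / infDist p A := div_nonneg dist_nonneg infDist_nonneg
  linarith [hφ a a.2]

lemma hausdorffExtension_le (hφ : ∀ a ∈ A, c ≤ φ a) {b : X} (hb : b ∈ A) (p : X) :
    hausdorffExtension A φ p ≤ φ b + dist b p / infDist p A - 1 :=
  ciInf_le (bddBelow_hausdorffExtension_terms hφ p) ⟨b, hb⟩

lemma hausdorffExtension_eq_div (hφ : ∀ a ∈ A, c ≤ φ a) (hA : A.Nonempty) {p : X}
    (hp : 0 < infDist p A) :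
    hausdorffExtension A φ p =
      (⨅ a : A, (φ a * infDist p A + dist (a : X) p)) / infDist p A - 1 := by
  have : Nonempty A := hA.to_subtype
  have hbdd : BddBelow (range fun a : A => φ a * infDist p A + dist (a : X) p) :=
    ⟨c * infDist p A, forall_mem_range.2 fun a => by
      nlinarith [hφ a a.2, dist_nonneg (x := (a : X)) (y := p)]⟩
  rw [Monotone.map_ciInf_of_continuousAt (f := fun t => t / infDist p A - 1) (by fun_prop)
    (fun _ _ hst => sub_le_sub_right (div_le_div_of_nonneg_right hst hp.le) 1) hbdd]
  refine iInf_congr fun a => ?_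
  rw [add_div, mul_div_cancel_right₀ _ hp.ne']

lemma lipschitzWith_ciInf_mul_infDist_add_dist {C : ℝ} (hC : ∀ a ∈ A, |φ a| ≤ C)
    (hA : A.Nonempty) :
    LipschitzWith (C + 1).toNNReal fun p => ⨅ a : A, (φ a * infDist p A + dist (a : X) p) := by
  have : Nonempty A := hA.to_subtype
  refine LipschitzWith.ciInf (fun a => LipschitzWith.of_le_add_mul' (C + 1) fun p q => ?_)
    fun p => ⟨-C * infDist p A, forall_mem_range.2 fun a => ?_⟩
  · have hφa := abs_le.1 (hC a a.2)
    have hr := abs_sub_le_iff.1 ((lipschitz_infDist_pt A).dist_le_mul p q)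
    simp only [NNReal.coe_one, one_mul] at hr
    nlinarith [dist_triangle (a : X) q p, dist_comm p q, dist_nonneg (x := p) (y := q)]
  · nlinarith [(abs_le.1 (hC a a.2)).1, dist_nonneg (x := (a : X)) (y := p),
      infDist_nonneg (x := p) (s := A)]

lemma continuousAt_hausdorffExtension {C : ℝ} (hC : ∀ a ∈ A, |φ a| ≤ C) (hA : A.Nonempty)
    (hAc : IsClosed A) {x : X} (hx : x ∉ A) : ContinuousAt (hausdorffExtension A φ) x := by
  have hφ : ∀ a ∈ A, -C ≤ φ a := fun a ha => neg_le_of_abs_le (hC a ha)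
  have hF := (lipschitzWith_ciInf_mul_infDist_add_dist hC hA).continuous
  have hr := (hAc.notMem_iff_infDist_pos hA).1 hx
  have hG : ContinuousAt (fun p =>
      (⨅ a : A, (φ a * infDist p A + dist (a : X) p)) / infDist p A - 1) x :=
    (hF.continuousAt.div (continuous_infDist_pt A).continuousAt hr.ne').sub continuousAt_const
  refine hG.congr ?_
  filter_upwards [hAc.isOpen_compl.mem_nhds hx] with p hp
  exact (hausdorffExtension_eq_div hφ hA ((hAc.notMem_iff_infDist_pos hA).1 hp)).symm

lemma eventually_lt_hausdorffExtension (hφ : ∀ a ∈ A, c ≤ φ a) (hAc : IsClosed A) {x : X}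
    (hx : x ∈ A) (hφx : ContinuousWithinAt φ A x) {l : ℝ} (hl : l < φ x) :
    ∀ᶠ q in 𝓝[Aᶜ] x, l < hausdorffExtension A φ q := by
  have : Nonempty A := ⟨⟨x, hx⟩⟩
  obtain ⟨m, hlm, hmx⟩ := exists_between hl
  obtain ⟨δ, hδ, hnear⟩ := Metric.eventually_nhds_iff.1
    (eventually_nhdsWithin_iff.1 (hφx.eventually (lt_mem_nhds hmx)))
  filter_upwards [self_mem_nhdsWithin,
    eventually_nhdsWithin_of_eventually_nhds (eventually_dist_mul_lt x 1 (half_pos hδ)),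
    eventually_nhdsWithin_of_eventually_nhds (eventually_dist_mul_lt x (m - c + 1) (half_pos hδ))]
    with q hq hqx hqK
  have hr := (hAc.notMem_iff_infDist_pos ⟨x, hx⟩).1 hq
  refine hlm.trans_le (le_ciInf fun a => ?_)
  have hra : infDist q A ≤ dist (a : X) q := dist_comm q a ▸ infDist_le_dist_of_mem a.2
  by_cases hax : dist (a : X) x < δ
  · have := (one_le_div hr).2 hra
    linarith [hnear hax a.2]
  · have hfar : δ / 2 ≤ dist (a : X) q := by linarith [dist_triangle (a : X) q x]
    have hrx : infDist q A ≤ dist q x := infDist_le_dist_of_mem hx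
    have : m - c + 1 ≤ dist (a : X) q / infDist q A := by
      rw [le_div_iff₀ hr]
      nlinarith
    linarith [hφ a a.2]

lemma eventually_hausdorffExtension_lt (hφ : ∀ a ∈ A, c ≤ φ a) (hAc : IsClosed A) {x : X}
    (hx : x ∈ A) (hφx : ContinuousWithinAt φ A x) {u : ℝ} (hu : φ x < u) :
    ∀ᶠ q in 𝓝[Aᶜ] x, hausdorffExtension A φ q < u := by
  obtain ⟨v, hxv, hvu⟩ := exists_between hu
  obtain ⟨δ, hδ, hnear⟩ := Metric.eventually_nhds_iff.1
    (eventually_nhdsWithin_iff.1 (hφx.eventually (gt_mem_nhds hxv)))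
  filter_upwards [self_mem_nhdsWithin,
    eventually_nhdsWithin_of_eventually_nhds (eventually_dist_mul_lt x (2 + (u - v)) hδ)]
    with q hq hqx
  have hr := (hAc.notMem_iff_infDist_pos ⟨x, hx⟩).1 hq
  obtain ⟨b, hb, hqb⟩ := (infDist_lt_iff ⟨x, hx⟩).1
    (lt_mul_of_one_lt_right hr (lt_add_of_pos_right 1 (sub_pos.2 hvu)))
  have hrx : infDist q A ≤ dist q x := infDist_le_dist_of_mem hx
  have hbx : dist b x < δ := by
    nlinarith [dist_triangle b q x, dist_comm q b, sub_pos.2 hvu]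
  have : dist b q / infDist q A < 1 + (u - v) := by
    rw [div_lt_iff₀ hr, dist_comm]
    linarith
  linarith [hausdorffExtension_le hφ hb q, hnear hbx hb]

lemma tendsto_hausdorffExtension_nhdsWithin_compl (hφ : ∀ a ∈ A, c ≤ φ a) (hAc : IsClosed A)
    {x : X} (hx : x ∈ A) (hφx : ContinuousWithinAt φ A x) :
    Tendsto (hausdorffExtension A φ) (𝓝[Aᶜ] x) (𝓝 (φ x)) :=
  tendsto_order.2 ⟨fun _ hl => eventually_lt_hausdorffExtension hφ hAc hx hφx hl,
    fun _ hu => eventually_hausdorffExtension_lt hφ hAc hx hφx hu⟩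

end HausdorffExtension

/-- Hausdorff's extension formula preserves continuity: the extension
`Ψ[φ](p) = inf_{a ∈ A} (φ a + d(a,p)/d(p,A) − 1)` of a bounded continuous
function `φ` on a nonempty closed set `A` is continuous on `X`. -/
theorem stmt_4 {X : Type*} [MetricSpace X] (A : Set X) (hA : A.Nonempty)
    (hAc : IsClosed A) (φ : X → ℝ)
    (hφc : ContinuousOn φ A) (hφb : ∃ C : ℝ, ∀ a ∈ A, |φ a| ≤ C)
    (f : X → ℝ)
    (hfA : ∀ a ∈ A, f a = φ a)
    (hf : ∀ p ∉ A, f p = ⨅ a : A, (φ a + dist (a : X) p / Metric.infDist p A - 1)) :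
    Continuous f := by
  obtain ⟨C, hC⟩ := hφb
  have hf' : ∀ p ∉ A, hausdorffExtension A φ p = f p := fun p hp => (hf p hp).symm
  refine continuous_iff_continuousAt.2 fun x => ?_
  by_cases hx : x ∈ A
  · have hφ : ∀ a ∈ A, -C ≤ φ a := fun a ha => neg_le_of_abs_le (hC a ha)
    rw [ContinuousAt, hfA x hx, ← nhdsWithin_univ, ← union_compl_self A, nhdsWithin_union]
    exact tendsto_sup.2
      ⟨tendsto_nhdsWithin_congr (fun p hp => (hfA p hp).symm) (hφc x hx),
        tendsto_nhdsWithin_congr hf'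
          (tendsto_hausdorffExtension_nhdsWithin_compl hφ hAc hx (hφc x hx))⟩
  · refine (continuousAt_hausdorffExtension hC hA hAc hx).congr ?_
    filter_upwards [hAc.isOpen_compl.mem_nhds hx] with p hp
    exact hf' p hp
end

section
/- Let (X,d) be a metric space, A ⊆ X a nonempty closed set, and φ : A → ℝ a bounded uniformly continuous function. Define Ψ[φ] : X → ℝ by Ψ[φ](a) = φ(a) for a ∈ A and Ψ[φ](p) = inf_{a∈A} [φ(a) + d(a,p)/d(p,A) − 1] for p ∈ X\A. Then Ψ[φ] is uniformly continuous on X. -/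
open Metric Set

/-- Hausdorff's extension formula preserves uniform continuity: the extension
`Ψ[φ](p) = inf_{a ∈ A} (φ a + d(a,p)/d(p,A) − 1)` of a bounded uniformly
continuous function `φ` on a nonempty closed set `A` is uniformly continuous on `X`. -/
theorem stmt_5 {X : Type*} [MetricSpace X] (A : Set X) (hA : A.Nonempty)
    (hAc : IsClosed A) (φ : X → ℝ)
    (hφu : UniformContinuousOn φ A) (hφb : ∃ C : ℝ, ∀ a ∈ A, |φ a| ≤ C)
    (f : X → ℝ)
    (hfA : ∀ a ∈ A, f a = φ a)
    (hf : ∀ p ∉ A, f p = ⨅ a : A, (φ a + dist (a : X) p / Metric.infDist p A - 1)) :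
    UniformContinuous f := by
  classical
  obtain ⟨a₀, ha₀⟩ := id hA
  haveI : Nonempty A := ⟨⟨a₀, ha₀⟩⟩
  obtain ⟨C₀, hC₀⟩ := hφb
  set C := max C₀ 0 with hCdef
  have hC0 : (0:ℝ) ≤ C := le_max_right _ _
  have hC1 : (0:ℝ) < C + 1 := by linarith
  have hCb : ∀ a ∈ A, -C ≤ φ a ∧ φ a ≤ C := fun a ha =>
    abs_le.mp (le_trans (hC₀ a ha) (le_max_left _ _))
  have hρpos : ∀ p ∉ A, 0 < infDist p A := fun p hp =>
    (hAc.notMem_iff_infDist_pos hA).mp hp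
  have hρd : ∀ p : X, ∀ a : A, infDist p A ≤ dist (a : X) p := fun p a => by
    rw [dist_comm]; exact infDist_le_dist_of_mem a.2
  -- lower bound on the terms of the infimum
  have hterm : ∀ p, p ∉ A → ∀ a : A,
      -C ≤ φ a + dist (a : X) p / infDist p A - 1 := by
    intro p hp a
    have h1 : (1:ℝ) ≤ dist (a : X) p / infDist p A :=
      (one_le_div (hρpos p hp)).mpr (hρd p a)
    have := (hCb a a.2).1
    linarith
  have hbdd : ∀ p, p ∉ A →
      BddBelow (Set.range fun a : A => φ a + dist (a : X) p / infDist p A - 1) := by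
    intro p hp
    refine ⟨-C, ?_⟩
    rintro x ⟨a, rfl⟩
    exact hterm p hp a
  have hfle : ∀ p, p ∉ A → ∀ a : A,
      f p ≤ φ a + dist (a : X) p / infDist p A - 1 := by
    intro p hp a
    rw [hf p hp]
    exact ciInf_le (hbdd p hp) a
  -- upper bound f p ≤ C + 1
  have hfub : ∀ p, p ∉ A → f p ≤ C + 1 := by
    intro p hp
    have hρ := hρpos p hp
    obtain ⟨a, haA, hd⟩ := (infDist_lt_iff hA).mp
      (show infDist p A < 2 * infDist p A by linarith)
    have h1 := hfle p hp ⟨a, haA⟩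
    have h2 : dist a p / infDist p A < 2 := by
      rw [div_lt_iff₀ hρ, dist_comm]
      linarith
    have := (hCb a haA).2
    simp only at h1
    linarith
  -- Lemma B : Lipschitz-type estimate away from A
  have lemB : ∀ p, p ∉ A → ∀ q, q ∉ A →
      f p ≤ f q + (2*C+4) * dist p q / infDist p A := by
    intro p hp q hq
    have hρp := hρpos p hp
    have hρq := hρpos q hq
    refine le_of_forall_pos_le_add ?_
    intro ε hε
    set ε' := min ε 1 with hε'def
    have hε'0 : 0 < ε' := lt_min hε one_pos
    have hε'1 : ε' ≤ 1 := min_le_right _ _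
    have hε'ε : ε' ≤ ε := min_le_left _ _
    have h1 : f q < f q + ε' := by linarith
    rw [hf q hq] at h1
    obtain ⟨a, ha⟩ := exists_lt_of_ciInf_lt h1
    rw [← hf q hq] at ha
    -- ha : φ a + dist a q / infDist q A - 1 < f q + ε'
    have hfq := hfub q hq
    have hφa := hCb a a.2
    have haq : dist (a : X) q ≤ (2*C+3) * infDist q A := by
      have h4 : dist (a : X) q / infDist q A < 2*C+3 := by linarith
      have := (div_lt_iff₀ hρq).mp h4
      linarith
    have hd1 : dist (a : X) p ≤ dist (a : X) q + dist p q := by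
      have := dist_triangle (a : X) q p
      rw [dist_comm q p] at this
      linarith
    have hd2 : infDist q A ≤ infDist p A + dist p q := by
      have := infDist_le_infDist_add_dist (x := q) (y := p) (s := A)
      rw [dist_comm q p] at this
      linarith
    have hdpq : (0:ℝ) ≤ dist p q := dist_nonneg
    have hmul : dist (a : X) p * infDist q A ≤
        dist (a : X) q * infDist p A + (2*C+4) * dist p q * infDist q A := by
      nlinarith [mul_le_mul_of_nonneg_right hd1 hρq.le,
        mul_le_mul_of_nonneg_left (show infDist q A - infDist p A ≤ dist p q by linarith)
          (dist_nonneg (x := (a : X)) (y := q)),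
        mul_le_mul_of_nonneg_right haq hdpq]
    have hkey : dist (a : X) p / infDist p A ≤
        dist (a : X) q / infDist q A + (2*C+4) * dist p q / infDist p A := by
      have h2 : dist (a : X) p / infDist p A - (2*C+4) * dist p q / infDist p A ≤
          dist (a : X) q / infDist q A := by
        rw [div_sub_div_same, div_le_div_iff₀ hρp hρq]
        nlinarith [hmul]
      linarith
    have h3 := hfle p hp a
    linarith
  -- Lemma A : near A the value of f is close to φ
  have lemA : ∀ ε : ℝ, 0 < ε → ∀ δ : ℝ, 0 < δ →
      (∀ a ∈ A, ∀ b ∈ A, dist a b < δ → |φ a - φ b| ≤ ε) →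
      ∀ p, p ∉ A → ∀ b ∈ A, dist p b < δ/2 → infDist p A ≤ δ/(4*(C+1)) →
      |f p - φ b| ≤ 2*ε := by
    intro ε hε δ hδ hmod p hp b hbA hpb hρ
    have hρp := hρpos p hp
    have hφb' := hCb b hbA
    rw [abs_le]
    constructor
    · -- lower bound : φ b - ε ≤ f p  (hence -2ε ≤ f p - φ b)
      have hlow : φ b - ε ≤ f p := by
        rw [hf p hp]
        refine le_ciInf fun a => ?_
        by_cases hcase : dist (a : X) p < δ/2
        · have hab : dist (a : X) b < δ := by
            calc dist (a : X) b ≤ dist (a : X) p + dist p b := dist_triangle _ _ _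
              _ < δ/2 + δ/2 := by linarith
              _ = δ := by ring
          have hm := abs_le.mp (hmod a a.2 b hbA hab)
          have h1 : (1:ℝ) ≤ dist (a : X) p / infDist p A :=
            (one_le_div hρp).mpr (hρd p a)
          linarith [hm.1]
        · push_neg at hcase
          have h1 : 2*(C+1) ≤ dist (a : X) p / infDist p A := by
            rw [le_div_iff₀ hρp]
            calc 2*(C+1) * infDist p A ≤ 2*(C+1) * (δ/(4*(C+1))) := by nlinarith
              _ = δ/2 := by field_simp; ring
              _ ≤ dist (a : X) p := hcase
          have := (hCb a a.2).1
          have := hφb'.2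
          linarith
      linarith
    · -- upper bound : f p ≤ φ b + 2ε
      have hρ4 : infDist p A ≤ δ/4 := by
        refine hρ.trans ?_
        rw [div_le_div_iff₀ (by linarith) (by norm_num)]
        nlinarith
      set s := min (ε * infDist p A) (δ/4) with hsdef
      have hs0 : 0 < s := lt_min (mul_pos hε hρp) (by linarith)
      obtain ⟨a, haA, hpa⟩ := (infDist_lt_iff hA).mp
        (show infDist p A < infDist p A + s by linarith)
      have hab : dist (a : X) b < δ := by
        have hsδ : s ≤ δ/4 := min_le_right _ _
        calc dist (a : X) b ≤ dist (a : X) p + dist p b := dist_triangle _ _ _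
          _ = dist p a + dist p b := by rw [dist_comm]
          _ < (δ/4 + δ/4) + δ/2 := by linarith
          _ = δ := by ring
      have hm := abs_le.mp (hmod a haA b hbA hab)
      have h2 : dist (a : X) p / infDist p A ≤ 1 + ε := by
        rw [div_le_iff₀ hρp, dist_comm]
        have : s ≤ ε * infDist p A := min_le_left _ _
        nlinarith
      have h3 := hfle p hp ⟨a, haA⟩
      simp only at h3
      linarith [hm.2]
  -- Main proof
  rw [Metric.uniformContinuous_iff]
  intro ε hε
  obtain ⟨δ, hδ0, hδ⟩ := Metric.uniformContinuousOn_iff.mp hφu (ε/8) (by linarith)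
  have hmod : ∀ a ∈ A, ∀ b ∈ A, dist a b < δ → |φ a - φ b| ≤ ε/8 := by
    intro a ha b hb h
    have := hδ a ha b hb h
    rw [Real.dist_eq] at this
    linarith
  set θ := δ/(8*(C+1)) with hθdef
  have hθ0 : 0 < θ := by positivity
  have hθeq : 2*θ = δ/(4*(C+1)) := by
    rw [hθdef]; field_simp; ring
  have hθmul : θ * (8*(C+1)) = δ := by
    rw [hθdef]; field_simp
  have hθδ : 8*θ ≤ δ := by nlinarith [mul_nonneg hθ0.le hC0]
  set η := min θ (ε*θ/(2*(2*C+4))) with hηdef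
  have hη0 : 0 < η := lt_min hθ0 (by positivity)
  have hηθ : η ≤ θ := min_le_left _ _
  have hη2 : η * (2*(2*C+4)) ≤ ε*θ := by
    have := min_le_right θ (ε*θ/(2*(2*C+4)))
    calc η * (2*(2*C+4)) ≤ (ε*θ/(2*(2*C+4))) * (2*(2*C+4)) := by
          apply mul_le_mul_of_nonneg_right (hηdef ▸ this)
          positivity
      _ = ε*θ := by field_simp
  refine ⟨η, hη0, ?_⟩
  intro p q hpq
  rw [Real.dist_eq]
  -- `near` handles pairs where the first point is close to A
  have near : ∀ p', p' ∉ A → ∀ q', q' ∉ A → dist p' q' < η →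
      infDist p' A ≤ θ → |f p' - f q'| < ε := by
    intro p hp q hq hpq hρθ
    obtain ⟨b, hbA, hpb⟩ := (infDist_lt_iff hA).mp
      (show infDist p A < 2*θ by linarith)
    have hpbδ : dist p b < δ/2 := by
      have : dist p b < 2*θ := hpb
      linarith [hθδ]
    have hA1 := lemA (ε/8) (by linarith) δ hδ0 hmod p hp b hbA hpbδ
      (by rw [← hθeq]; linarith)
    have hqb : dist q b < δ/2 := by
      calc dist q b ≤ dist q p + dist p b := dist_triangle _ _ _
        _ = dist p q + dist p b := by rw [dist_comm]
        _ < η + 2*θ := by linarith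
        _ ≤ 3*θ := by linarith
        _ ≤ δ/2 := by linarith
    have hρq : infDist q A ≤ δ/(4*(C+1)) := by
      have h1 : infDist q A ≤ infDist p A + dist q p :=
        infDist_le_infDist_add_dist
      rw [dist_comm] at h1
      rw [← hθeq]
      linarith
    have hA2 := lemA (ε/8) (by linarith) δ hδ0 hmod q hq b hbA hqb hρq
    have h1 := abs_le.mp hA1
    have h2 := abs_le.mp hA2
    rw [abs_lt]
    constructor <;> [linarith [h1.1, h2.2]; linarith [h1.2, h2.1]]
  by_cases hpA : p ∈ A <;> by_cases hqA : q ∈ A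
  · rw [hfA p hpA, hfA q hqA]
    have hηδ : η < δ := by linarith
    have := hδ p hpA q hqA (by linarith)
    rw [Real.dist_eq] at this
    linarith
  · -- p ∈ A, q ∉ A
    have h1 : dist q p < δ/2 := by
      rw [dist_comm]; linarith
    have h2 : infDist q A ≤ δ/(4*(C+1)) := by
      have : infDist q A ≤ dist q p := infDist_le_dist_of_mem hpA
      rw [dist_comm] at this
      rw [← hθeq]
      linarith
    have := lemA (ε/8) (by linarith) δ hδ0 hmod q hqA p hpA h1 h2
    rw [hfA p hpA, abs_sub_comm]
    have := abs_le.mp this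
    rw [abs_lt]
    constructor <;> linarith [this.1, this.2]
  · -- p ∉ A, q ∈ A
    have h1 : dist p q < δ/2 := by linarith
    have h2 : infDist p A ≤ δ/(4*(C+1)) := by
      have : infDist p A ≤ dist p q := infDist_le_dist_of_mem hqA
      rw [← hθeq]
      linarith
    have := lemA (ε/8) (by linarith) δ hδ0 hmod p hpA q hqA h1 h2
    rw [hfA q hqA]
    have := abs_le.mp this
    rw [abs_lt]
    constructor <;> linarith [this.1, this.2]
  · -- both outside A
    by_cases h1 : infDist p A ≤ θ
    · exact near p hpA q hqA hpq h1
    · by_cases h2 : infDist q A ≤ θ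
      · have := near q hqA p hpA (by rwa [dist_comm]) h2
        rwa [abs_sub_comm] at this
      · push_neg at h1 h2
        have hρp := hρpos p hpA
        have hρq := hρpos q hqA
        have b1 := lemB p hpA q hqA
        have b2 := lemB q hqA p hpA
        have hA1 : (2*C+4) * dist p q ≤ (2*C+4) * η :=
          mul_le_mul_of_nonneg_left hpq.le (by linarith)
        have hA2 : (2*C+4) * η ≤ ε*θ/2 := by linarith [hη2]
        have hA3p : ε*θ ≤ ε * infDist p A :=
          mul_le_mul_of_nonneg_left h1.le hε.le
        have hA3q : ε*θ ≤ ε * infDist q A :=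
          mul_le_mul_of_nonneg_left h2.le hε.le
        have e1 : (2*C+4) * dist p q / infDist p A ≤ ε/2 := by
          rw [div_le_iff₀ hρp]
          linarith
        have e2 : (2*C+4) * dist q p / infDist q A ≤ ε/2 := by
          rw [div_le_iff₀ hρq, dist_comm]
          linarith
        rw [abs_lt]
        constructor <;> linarith
end

section
/- Let (X,d) be a metric space and A ⊆ X a nonempty closed set. Let Ψ be the Hausdorff extension operator on bounded functions: Ψ[φ](a) = φ(a) for a ∈ A, Ψ[φ](p) = inf_{a∈A} [φ(a) + d(a,p)/d(p,A) − 1] for p ∉ A. Then for any two bounded functions φ, ψ : A → ℝ, sup_{x∈X} |Ψ[φ](x) − Ψ[ψ](x)| = sup_{a∈A} |φ(a) − ψ(a)|; i.e. Ψ is an isometry for the sup-norm. -/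
open Metric Set
open scoped Classical

/-- Hausdorff's extension operator. -/
noncomputable def hausdorffExt {X : Type*} [MetricSpace X] (A : Set X) (φ : X → ℝ) :
    X → ℝ := fun p =>
  if p ∈ A then φ p
  else ⨅ a : A, (φ a + dist (a : X) p / Metric.infDist p A - 1)

/-- Hausdorff's extension operator is an isometry for the sup-norm:
`sup_{x ∈ X} |Ψ[φ](x) − Ψ[ψ](x)| = sup_{a ∈ A} |φ(a) − ψ(a)|`. -/
theorem stmt_6 {X : Type*} [MetricSpace X] (A : Set X) (hA : A.Nonempty)
    (hAc : IsClosed A) (φ ψ : X → ℝ)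
    (hφb : ∃ C : ℝ, ∀ a ∈ A, |φ a| ≤ C) (hψb : ∃ C : ℝ, ∀ a ∈ A, |ψ a| ≤ C) :
    (⨆ x : X, |hausdorffExt A φ x - hausdorffExt A ψ x|) = ⨆ a : A, |φ a - ψ a| := by
  obtain ⟨Cφ, hCφ⟩ := hφb
  obtain ⟨Cψ, hCψ⟩ := hψb
  haveI : Nonempty A := hA.to_subtype
  haveI : Nonempty X := ⟨hA.choose⟩
  set S := ⨆ a : A, |φ a - ψ a| with hS
  have hbddS : BddAbove (Set.range fun a : A => |φ a - ψ a|) := by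
    refine ⟨Cφ + Cψ, ?_⟩
    rintro _ ⟨a, rfl⟩
    calc |φ a - ψ a| ≤ |φ a| + |ψ a| := abs_sub _ _
    _ ≤ Cφ + Cψ := add_le_add (hCφ a a.2) (hCψ a a.2)
  have hφS : ∀ a : A, φ a - ψ a ≤ S := fun a =>
    le_trans (le_abs_self _) (le_ciSup hbddS a)
  have hψS : ∀ a : A, ψ a - φ a ≤ S := fun a =>
    le_trans (le_trans (le_abs_self _) (abs_sub_comm (ψ a) (φ a)).le) (le_ciSup hbddS a)
  have key : ∀ x, |hausdorffExt A φ x - hausdorffExt A ψ x| ≤ S := by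
    intro x
    by_cases hx : x ∈ A
    · simp only [hausdorffExt, if_pos hx]
      exact le_ciSup hbddS ⟨x, hx⟩
    · simp only [hausdorffExt, if_neg hx]
      have hd : 0 < infDist x A := by
        rwa [← hAc.notMem_iff_infDist_pos hA]
      have hc : ∀ a : A, (1 : ℝ) ≤ dist (a : X) x / infDist x A := by
        intro a
        rw [one_le_div hd]
        rw [dist_comm]
        exact infDist_le_dist_of_mem a.2
      have hbb : ∀ (f : X → ℝ) (Cf : ℝ), (∀ a ∈ A, |f a| ≤ Cf) →
          BddBelow (Set.range fun a : A => f a + dist (a : X) x / infDist x A - 1) := by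
        intro f Cf hCf
        refine ⟨-Cf, ?_⟩
        rintro _ ⟨a, rfl⟩
        have h1 := hc a
        have h2 := (abs_le.mp (hCf a a.2)).1
        dsimp; linarith
      have main : ∀ f g : X → ℝ,
          BddBelow (Set.range fun a : A => f a + dist (a : X) x / infDist x A - 1) →
          (∀ a : A, f a - g a ≤ S) →
          (⨅ a : A, (f a + dist (a : X) x / infDist x A - 1)) ≤
          (⨅ a : A, (g a + dist (a : X) x / infDist x A - 1)) + S := by
        intro f g hbbf hfg
        rw [← sub_le_iff_le_add]
        refine le_ciInf fun a => ?_
        have h1 := ciInf_le hbbf a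
        have h2 := hfg a
        linarith
      rw [abs_sub_le_iff]
      constructor
      · linarith [main φ ψ (hbb φ Cφ hCφ) hφS]
      · linarith [main ψ φ (hbb ψ Cψ hCψ) hψS]
  refine le_antisymm (ciSup_le key) (ciSup_le fun a => ?_)
  have heq : |φ a - ψ a| = |hausdorffExt A φ a - hausdorffExt A ψ a| := by
    simp [hausdorffExt, a.2]
  rw [heq]
  exact le_ciSup ⟨S, by rintro _ ⟨x, rfl⟩; exact key x⟩ (a : X)
end

section
/- There exist a metric space X, a nonempty closed subset A ⊆ X, and a bounded continuous function φ : A → ℝ such that the Hausdorff extension operator Ψ (defined by Ψ[ψ](p) = inf_{a∈A}[ψ(a)+d(a,p)/d(p,A)−1] for p ∉ A) satisfies Ψ[2φ] ≠ 2Ψ[φ]. Concretely, take X = [−1,∞), A = [−1,0], φ(a) = a; then for p > 0, Ψ[kφ](p) = 0 if p ≤ 1/k and Ψ[kφ](p) = 1/p − k if p ≥ 1/k, so Ψ[2φ] ≠ 2Ψ[φ]. -/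
open Metric Set
open scoped Classical

lemma infd01 : Metric.infDist (2:ℝ) ({0,1} : Set ℝ) = 1 := by
  apply le_antisymm
  · have := Metric.infDist_le_dist_of_mem (x := (2:ℝ)) (s := ({0,1}:Set ℝ))
      (y := 1) (by simp)
    have h1 : |(2:ℝ)-1| = 1 := by norm_num
    simpa [Real.dist_eq, h1] using this
  · by_contra hlt
    push_neg at hlt
    rw [Metric.infDist_lt_iff ⟨0, by simp⟩] at hlt
    obtain ⟨y, (rfl|rfl), hy⟩ := hlt <;> rw [Real.dist_eq] at hy <;>
      norm_num at hy

/-- Hausdorff's extension operator is not linear: there are a metric space `X`,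
a nonempty closed `A ⊆ X` and a bounded continuous `φ` on `A` with
`Ψ[2φ] ≠ 2Ψ[φ]`.  Concretely `X = [−1,∞)`, `A = [−1,0]`, `φ(a) = a`. -/
theorem stmt_8 :
    ∃ (X : Type) (_ : MetricSpace X) (A : Set X) (φ : X → ℝ),
      A.Nonempty ∧ IsClosed A ∧ ContinuousOn φ A ∧ (∃ C : ℝ, ∀ a ∈ A, |φ a| ≤ C) ∧
      hausdorffExt A (fun a => 2 * φ a) ≠ fun x => 2 * hausdorffExt A φ x := by
  refine ⟨ℝ, inferInstance, {0,1}, id, ⟨0, by simp⟩,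
    (Set.Finite.insert _ (Set.finite_singleton _)).isClosed,
    continuous_id.continuousOn, ⟨1, ?_⟩, ?_⟩
  · rintro a (rfl | rfl) <;> norm_num
  · intro h
    have h2 := congrFun h 2
    have hmem : (2:ℝ) ∉ ({0,1} : Set ℝ) := by norm_num
    have e1 : hausdorffExt ({0,1}:Set ℝ) (fun a => 2 * id a) 2 = 1 := by
      rw [hausdorffExt, if_neg hmem, infd01]
      simp only [id_eq]
      apply le_antisymm
      · refine le_trans (ciInf_le ?_ ⟨0, by simp⟩) ?_
        · refine ⟨0, ?_⟩
          rintro x ⟨⟨a, (rfl|rfl)⟩, rfl⟩ <;> simp [Real.dist_eq] <;> norm_num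
        · norm_num [Real.dist_eq]
      · apply le_ciInf
        rintro ⟨a, (rfl|rfl)⟩ <;> simp [Real.dist_eq] <;> norm_num
    have e2 : hausdorffExt ({0,1}:Set ℝ) id 2 = 1 := by
      rw [hausdorffExt, if_neg hmem, infd01]
      have : (fun a : ({0,1}:Set ℝ) => (id (a:ℝ) + dist (a:ℝ) 2 / 1 - 1))
          = fun _ => (1:ℝ) := by
        funext a
        rcases a with ⟨a, (rfl|rfl)⟩ <;> simp [Real.dist_eq] <;> norm_num
      rw [this, ciInf_const]
    rw [e1, e2] at h2
    norm_num at h2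
end

section
/- Let (X,d) be a metric space, A ⊆ X a nonempty closed set, F : Δ → (0,1] where Δ = {(s,t) : s ≥ t > 0}, and suppose F is continuous and s ↦ F(s,t) is decreasing for each fixed t > 0. For a bounded φ : A → [0,∞), define Ω_F[φ](p) = sup_{a∈A} φ(a)·F(d(a,p), d(p,A)) for p ∉ A. Then for p ∈ A, τ > 0, and x ∈ O(p,τ)\A: Ω_F[1_A](x) = F(d(x,A), d(x,A)) = sup{ F(d(a,x), d(x,A)) : a ∈ A, d(a,p) < 2τ }, where 1_A is the constant function 1 on A. -/
open Metric Set

/-- Relaxed representation of the extension of the constant function `1` on `A`: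
for `p ∈ A`, `τ > 0` and `x ∈ O(p,τ) \ A`,
`sup_{a ∈ A} F(d(a,x), d(x,A)) = F(d(x,A), d(x,A))
  = sup_{a ∈ A, d(a,p) < 2τ} F(d(a,x), d(x,A))`. -/
theorem stmt_11 {X : Type*} [MetricSpace X] (A : Set X) (hA : A.Nonempty)
    (hAc : IsClosed A) (F : ℝ → ℝ → ℝ)
    (hFr : ∀ s t : ℝ, t ≤ s → 0 < t → 0 < F s t ∧ F s t ≤ 1)
    (hFc : ContinuousOn (fun q : ℝ × ℝ => F q.1 q.2) {q : ℝ × ℝ | q.2 ≤ q.1 ∧ 0 < q.2})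
    (hFd : ∀ t : ℝ, 0 < t → AntitoneOn (fun s => F s t) (Set.Ici t))
    (p : X) (hp : p ∈ A) (τ : ℝ) (hτ : 0 < τ) (x : X)
    (hx : dist x p < τ) (hxA : x ∉ A) :
    (⨆ a : A, F (dist (a : X) x) (Metric.infDist x A)) =
        F (Metric.infDist x A) (Metric.infDist x A) ∧
    F (Metric.infDist x A) (Metric.infDist x A) =
      ⨆ a : {a : X // a ∈ A ∧ dist a p < 2 * τ}, F (dist (a : X) x) (Metric.infDist x A) := by
  set δ := Metric.infDist x A with hδ
  have hδpos : 0 < δ := by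
    rw [hδ, ← hAc.notMem_iff_infDist_pos hA]
    exact hxA
  have hδτ : δ < τ := lt_of_le_of_lt (Metric.infDist_le_dist_of_mem hp) hx
  have hδle : ∀ a ∈ A, δ ≤ dist a x := fun a ha => by
    rw [dist_comm]; exact Metric.infDist_le_dist_of_mem ha
  have hub : ∀ a ∈ A, F (dist a x) δ ≤ F δ δ := fun a ha =>
    hFd δ hδpos Set.self_mem_Ici (hδle a ha) (hδle a ha)
  have hbd1 : ∀ a ∈ A, F (dist a x) δ ≤ 1 := fun a ha => (hFr _ _ (hδle a ha) hδpos).2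
  have hneA : Nonempty A := ⟨⟨p, hp⟩⟩
  have hne : Nonempty {a : X // a ∈ A ∧ dist a p < 2 * τ} :=
    ⟨⟨p, hp, by simpa using by positivity⟩⟩
  have hbdd1 : BddAbove (Set.range fun a : A => F (dist (a : X) x) δ) :=
    ⟨1, by rintro _ ⟨a, rfl⟩; exact hbd1 a a.2⟩
  have hbdd2 : BddAbove (Set.range fun a : {a : X // a ∈ A ∧ dist a p < 2 * τ} =>
      F (dist (a : X) x) δ) :=
    ⟨1, by rintro _ ⟨a, rfl⟩; exact hbd1 a a.2.1⟩
  have happrox : ∀ ε > (0 : ℝ), ∃ a : X, a ∈ A ∧ dist a p < 2 * τ ∧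
      F δ δ - ε < F (dist a x) δ := by
    intro ε hε
    have hc : ContinuousWithinAt (fun q : ℝ × ℝ => F q.1 q.2)
        {q : ℝ × ℝ | q.2 ≤ q.1 ∧ 0 < q.2} (δ, δ) := hFc (δ, δ) ⟨le_refl δ, hδpos⟩
    rw [Metric.continuousWithinAt_iff] at hc
    obtain ⟨η, hη, hc⟩ := hc ε hε
    set η' := min η (τ - δ) with hη'
    have hη'pos : 0 < η' := lt_min hη (by linarith)
    obtain ⟨a, ha, hax⟩ := (Metric.infDist_lt_iff hA).mp
      (show Metric.infDist x A < δ + η' by rw [← hδ]; linarith)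
    have haxδ : dist a x < δ + η' := by rw [dist_comm]; exact hax
    refine ⟨a, ha, ?_, ?_⟩
    · have h1 : dist a x < τ := by
        have := min_le_right η (τ - δ)
        linarith
      calc dist a p ≤ dist a x + dist x p := dist_triangle _ _ _
        _ < τ + τ := by linarith
        _ = 2 * τ := by ring
    · have hmem : ((dist a x, δ) : ℝ × ℝ) ∈ {q : ℝ × ℝ | q.2 ≤ q.1 ∧ 0 < q.2} :=
        ⟨hδle a ha, hδpos⟩
      have hdist : dist ((dist a x, δ) : ℝ × ℝ) ((δ, δ) : ℝ × ℝ) < η := by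
        rw [Prod.dist_eq]
        have h1 : dist (dist a x) δ < η := by
          rw [Real.dist_eq, abs_of_nonneg (by linarith [hδle a ha])]
          have := min_le_left η (τ - δ)
          linarith
        simp only [dist_self]
        exact max_lt h1 hη
      have hclose := hc hmem hdist
      rw [Real.dist_eq] at hclose
      have := (abs_lt.mp hclose).1
      linarith
  have h2 : F δ δ = ⨆ a : {a : X // a ∈ A ∧ dist a p < 2 * τ}, F (dist (a : X) x) δ := by
    apply le_antisymm
    · refine le_of_forall_pos_le_add ?_
      intro ε hε
      obtain ⟨a, ha, hap, hlt⟩ := happrox ε hε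
      have hle : F (dist a x) δ ≤ ⨆ a : {a : X // a ∈ A ∧ dist a p < 2 * τ},
          F (dist (a : X) x) δ := le_ciSup hbdd2 ⟨a, ha, hap⟩
      linarith
    · exact ciSup_le fun a => hub a a.2.1
  have h1 : (⨆ a : A, F (dist (a : X) x) δ) = F δ δ := by
    apply le_antisymm
    · exact ciSup_le fun a => hub a a.2
    · rw [h2]
      exact ciSup_le fun a => le_ciSup hbdd1 (⟨(a : X), a.2.1⟩ : A)
  exact ⟨h1, h2⟩
end

section
/- Let (X,d) be a metric space, A ⊆ X a nonempty closed set, and F : Δ → (0,1], Δ = {(s,t) : s ≥ t > 0}, a continuous function satisfying: F(t,t) → 1 as t → 0⁺; F(s,t) → 0 as t → 0⁺ for each fixed s > 0; and s ↦ F(s,t) decreasing for each fixed t. Let φ : A → [0,∞) be bounded and continuous, and define Ω_F[φ] : X → [0,∞) by Ω_F[φ]|A = φ and Ω_F[φ](p) = sup_{a∈A} φ(a)·F(d(a,p), d(p,A)) for p ∉ A. Then Ω_F[φ] is continuous at every point of A. If moreover φ is uniformly continuous, then Ω_F[φ] is uniformly continuous at the points of A (uniform version: for every ε > 0 there is δ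 > 0 with |Ω_F[φ](x) − φ(p)| ≤ ε whenever p ∈ A, x ∈ X, d(x,p) < δ). -/
open Metric Set Filter

/-- The sup-extension `Ω_F[φ]` of a bounded continuous nonnegative `φ` is continuous
at every point of `A`; if `φ` is uniformly continuous, then `Ω_F[φ]` is uniformly
continuous at the points of `A`. -/
theorem stmt_13 {X : Type*} [MetricSpace X] (A : Set X) (hA : A.Nonempty)
    (hAc : IsClosed A) (F : ℝ → ℝ → ℝ)
    (hFr : ∀ s t : ℝ, t ≤ s → 0 < t → 0 < F s t ∧ F s t ≤ 1)
    (hFc : ContinuousOn (fun q : ℝ × ℝ => F q.1 q.2) {q : ℝ × ℝ | q.2 ≤ q.1 ∧ 0 < q.2})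
    (hF1 : Tendsto (fun t : ℝ => F t t) (nhdsWithin 0 (Set.Ioi 0)) (nhds 1))
    (hF0 : ∀ s : ℝ, 0 < s →
      Tendsto (fun t : ℝ => F s t) (nhdsWithin 0 (Set.Ioi 0)) (nhds 0))
    (hFd : ∀ t : ℝ, 0 < t → AntitoneOn (fun s => F s t) (Set.Ici t))
    (φ : X → ℝ) (hφ0 : ∀ a ∈ A, 0 ≤ φ a) (hφb : ∃ C : ℝ, ∀ a ∈ A, φ a ≤ C)
    (hφc : ContinuousOn φ A)
    (f : X → ℝ) (hfA : ∀ a ∈ A, f a = φ a)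
    (hf : ∀ p ∉ A, f p = ⨆ a : A, φ a * F (dist (a : X) p) (Metric.infDist p A)) :
    (∀ p ∈ A, ContinuousAt f p) ∧
    (UniformContinuousOn φ A →
      ∀ ε > 0, ∃ δ > 0, ∀ p ∈ A, ∀ x : X, dist x p < δ → |f x - φ p| ≤ ε) := by
  obtain ⟨C, hC⟩ := hφb
  obtain ⟨a₀, ha₀⟩ := hA
  have hne : Nonempty A := ⟨⟨a₀, ha₀⟩⟩
  have hC0 : 0 ≤ C := le_trans (hφ0 a₀ ha₀) (hC a₀ ha₀)
  -- basic facts for x ∉ A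
  have ht : ∀ x ∉ A, 0 < infDist x A := by
    intro x hx
    exact (hAc.notMem_iff_infDist_pos ⟨a₀, ha₀⟩).1 hx
  have htd : ∀ x : X, ∀ b ∈ A, infDist x A ≤ dist b x := by
    intro x b hb
    rw [dist_comm]; exact infDist_le_dist_of_mem hb
  have hbdd : ∀ x : X, x ∉ A →
      BddAbove (Set.range fun a : A => φ a * F (dist (a : X) x) (infDist x A)) := by
    intro x hx
    refine ⟨C, ?_⟩
    rintro y ⟨a, rfl⟩
    have h1 := hFr (dist (a : X) x) (infDist x A) (htd x a a.2) (ht x hx)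
    calc φ (a : X) * F (dist (a : X) x) (infDist x A) ≤ φ (a : X) * 1 :=
          mul_le_mul_of_nonneg_left h1.2 (hφ0 a a.2)
      _ = φ (a : X) := mul_one _
      _ ≤ C := hC a a.2
  have hf_ge : ∀ x, x ∉ A → ∀ b ∈ A, φ b * F (dist b x) (infDist x A) ≤ f x := by
    intro x hx b hb
    rw [hf x hx]
    exact le_ciSup (hbdd x hx) ⟨b, hb⟩
  have hf0 : ∀ x, x ∉ A → 0 ≤ f x := by
    intro x hx
    refine le_trans ?_ (hf_ge x hx a₀ ha₀)
    exact mul_nonneg (hφ0 a₀ ha₀)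
      (hFr _ _ (htd x a₀ ha₀) (ht x hx)).1.le
  -- upper estimate
  have upper : ∀ ε > (0:ℝ), ∀ r > (0:ℝ), ∃ δ > (0:ℝ), ∀ p ∈ A,
      (∀ a ∈ A, dist a p < r → φ a ≤ φ p + ε) →
      ∀ x, x ∉ A → dist x p < δ → f x ≤ φ p + ε := by
    intro ε hε r hr
    have hr2 : (0:ℝ) < r / 2 := by linarith
    have hεC : (0:ℝ) < ε / (C + 1) := by positivity
    obtain ⟨τ, hτ0, hτ⟩ := (Metric.tendsto_nhdsWithin_nhds.1 (hF0 (r/2) hr2)) (ε / (C+1)) hεC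
    refine ⟨min (r/2) τ, lt_min hr2 hτ0, ?_⟩
    intro p hp hφr x hx hdx
    have htpos := ht x hx
    have htle : infDist x A ≤ dist x p := infDist_le_dist_of_mem hp
    have htsmall : infDist x A < min (r/2) τ := lt_of_le_of_lt htle hdx
    rw [hf x hx]
    apply ciSup_le
    rintro ⟨a, ha⟩
    have hta : infDist x A ≤ dist a x := htd x a ha
    have hFa := hFr (dist a x) (infDist x A) hta htpos
    by_cases hcase : dist a p < r
    · calc φ a * F (dist a x) (infDist x A) ≤ φ a * 1 :=
            mul_le_mul_of_nonneg_left hFa.2 (hφ0 a ha)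
        _ = φ a := mul_one _
        _ ≤ φ p + ε := hφr a ha hcase
    · push_neg at hcase
      have hax : r / 2 ≤ dist a x := by
        have := dist_triangle a x p
        have hxp : dist x p < r / 2 := lt_of_lt_of_le hdx (min_le_left _ _)
        linarith
      have hmono := hFd (infDist x A) htpos
      have h1 : F (dist a x) (infDist x A) ≤ F (r/2) (infDist x A) := by
        have hm1 : r/2 ∈ Set.Ici (infDist x A) :=
          le_of_lt (lt_of_lt_of_le htsmall (min_le_left _ _))
        exact hmono hm1 (Set.mem_Ici.2 hta) hax
      have h2 : F (r/2) (infDist x A) < ε / (C+1) := by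
        have := hτ (Set.mem_Ioi.2 htpos)
          (by rw [Real.dist_eq, sub_zero, abs_of_pos htpos]
              exact lt_of_lt_of_le htsmall (min_le_right _ _))
        rw [Real.dist_eq, sub_zero] at this
        exact lt_of_le_of_lt (le_abs_self _) this
      have hφp : 0 ≤ φ p := hφ0 p hp
      have hεCle : C * (ε / (C+1)) ≤ ε := by
        rw [div_eq_inv_mul, ← mul_assoc]
        have h3 : C * (C+1)⁻¹ ≤ 1 := by
          rw [mul_inv_le_iff₀ (by linarith)]
          linarith
        nlinarith
      calc φ a * F (dist a x) (infDist x A) ≤ C * (ε / (C+1)) := by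
            apply mul_le_mul (hC a ha) (le_of_lt (lt_of_le_of_lt h1 h2)) hFa.1.le hC0
        _ ≤ ε := hεCle
        _ ≤ φ p + ε := by linarith
  -- lower estimate
  have lower : ∀ ε > (0:ℝ), ∀ r > (0:ℝ), ∃ δ > (0:ℝ), ∀ p ∈ A,
      (∀ a ∈ A, dist a p < r → φ p - ε ≤ φ a) →
      ∀ x, x ∉ A → dist x p < δ → φ p - (3 + 2*C) * ε ≤ f x := by
    intro ε hε r hr
    obtain ⟨τ, hτ0, hτ⟩ := (Metric.tendsto_nhdsWithin_nhds.1 hF1) ε hε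
    have hr3 : (0:ℝ) < r / 3 := by linarith
    refine ⟨min (r/3) τ, lt_min hr3 hτ0, ?_⟩
    intro p hp hφr x hx hdx
    set t := infDist x A with htdef
    have htpos := ht x hx
    have htle : t ≤ dist x p := infDist_le_dist_of_mem hp
    have htsmall : t < min (r/3) τ := lt_of_le_of_lt htle hdx
    -- F t t close to 1
    have hFtt : 1 - ε < F t t := by
      have := hτ (Set.mem_Ioi.2 htpos)
        (by rw [Real.dist_eq, sub_zero, abs_of_pos htpos]
            exact lt_of_lt_of_le htsmall (min_le_right _ _))
      rw [Real.dist_eq] at this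
      have := abs_lt.1 this
      linarith [this.1]
    -- continuity of F at (t,t)
    have hmem : ((t, t) : ℝ × ℝ) ∈ {q : ℝ × ℝ | q.2 ≤ q.1 ∧ 0 < q.2} := ⟨le_refl _, htpos⟩
    obtain ⟨η, hη0, hη⟩ := Metric.continuousWithinAt_iff.1 (hFc (t, t) hmem) ε hε
    -- choose a near-optimal point a
    have hlt : t < t + min η (r/3) := by
      have : (0:ℝ) < min η (r/3) := lt_min hη0 hr3
      linarith
    obtain ⟨a, ha, hax⟩ := (Metric.infDist_lt_iff ⟨a₀, ha₀⟩).1 (lt_of_eq_of_lt htdef.symm hlt)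
    have hax' : dist a x < t + min η (r/3) := by rwa [dist_comm]
    have hta : t ≤ dist a x := htd x a ha
    -- F (dist a x) t is close to F t t
    have hmem2 : ((dist a x, t) : ℝ × ℝ) ∈ {q : ℝ × ℝ | q.2 ≤ q.1 ∧ 0 < q.2} := ⟨hta, htpos⟩
    have hdist : dist ((dist a x, t) : ℝ × ℝ) (t, t) < η := by
      rw [Prod.dist_eq]
      simp only [Real.dist_eq, sub_self, abs_zero]
      rw [abs_of_nonneg (by linarith)]
      have : dist a x - t < min η (r/3) := by linarith
      have h4 : max (dist a x - t) 0 < η := by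
        apply max_lt (lt_of_lt_of_le this (min_le_left _ _)) hη0
      simpa using h4
    have hFst : 1 - 2*ε < F (dist a x) t := by
      have := hη hmem2 hdist
      rw [Real.dist_eq] at this
      have := abs_lt.1 this
      linarith [this.1]
    -- a is near p
    have hap : dist a p < r := by
      have h5 := dist_triangle a x p
      have h6 : dist a x < t + r/3 := lt_of_lt_of_le hax' (by
        have := min_le_right η (r/3); linarith)
      have h7 : t < r/3 := lt_of_lt_of_le htsmall (min_le_left _ _)
      have h8 : dist x p < r/3 := lt_of_lt_of_le hdx (min_le_left _ _)
      linarith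
    have hφa : φ p - ε ≤ φ a := hφr a ha hap
    have key := hf_ge x hx a ha
    by_cases hcase : φ p ≤ ε
    · have h9 := hf0 x hx
      nlinarith
    · push_neg at hcase
      have hφpε : 0 ≤ φ p - ε := by linarith
      have hF0' := (hFr (dist a x) t hta htpos).1.le
      have h10 : (φ p - ε) * (1 - 2*ε) ≤ φ a * F (dist a x) t := by
        calc (φ p - ε) * (1 - 2*ε) ≤ (φ p - ε) * F (dist a x) t :=
              mul_le_mul_of_nonneg_left hFst.le hφpε
          _ ≤ φ a * F (dist a x) t := mul_le_mul_of_nonneg_right hφa hF0'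
      have hφpC : φ p ≤ C := hC p hp
      nlinarith
  -- combine the two estimates
  have key : ∀ ε > (0:ℝ), ∀ r > (0:ℝ), ∃ δ > (0:ℝ), ∀ p ∈ A,
      (∀ a ∈ A, dist a p < r → |φ a - φ p| ≤ ε) →
      ∀ x, x ∉ A → dist x p < δ → |f x - φ p| ≤ (3 + 2*C) * ε := by
    intro ε hε r hr
    obtain ⟨δ₁, hδ₁0, hu⟩ := upper ε hε r hr
    obtain ⟨δ₂, hδ₂0, hl⟩ := lower ε hε r hr
    refine ⟨min δ₁ δ₂, lt_min hδ₁0 hδ₂0, ?_⟩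
    intro p hp hφr x hx hdx
    have h1 := hu p hp (fun a ha har => by
      have := hφr a ha har; have := abs_le.1 this; linarith [this.1, this.2]) x hx
      (lt_of_lt_of_le hdx (min_le_left _ _))
    have h2 := hl p hp (fun a ha har => by
      have := hφr a ha har; have := abs_le.1 this; linarith [this.1]) x hx
      (lt_of_lt_of_le hdx (min_le_right _ _))
    rw [abs_le]
    constructor <;> nlinarith
  constructor
  · -- continuity at points of A
    intro p hp
    rw [Metric.continuousAt_iff]
    intro ε hε
    have h3C : (0:ℝ) < 3 + 2*C := by linarith
    set ε' := ε / (2 * (3 + 2*C)) with hε'def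
    have hε'0 : 0 < ε' := by positivity
    obtain ⟨r, hr0, hrc⟩ := Metric.continuousWithinAt_iff.1 (hφc p hp) ε' hε'0
    obtain ⟨δ, hδ0, hδ⟩ := key ε' hε'0 r hr0
    refine ⟨min r δ, lt_min hr0 hδ0, ?_⟩
    intro x hdx
    have hfp : f p = φ p := hfA p hp
    by_cases hx : x ∈ A
    · rw [hfA x hx, hfp]
      calc dist (φ x) (φ p) < ε' := hrc hx (lt_of_lt_of_le hdx (min_le_left _ _))
        _ ≤ ε := by
          rw [hε'def, div_le_iff₀ (by positivity)]
          nlinarith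
    · have h := hδ p hp (fun a ha har => by
        have := hrc ha har
        rw [Real.dist_eq] at this
        exact this.le) x hx (lt_of_lt_of_le hdx (min_le_right _ _))
      rw [hfp, Real.dist_eq]
      have heq : (3 + 2*C) * ε' = ε / 2 := by
        rw [hε'def]; field_simp
      rw [heq] at h
      linarith [h, hε]
  · -- uniform version
    intro hu ε hε
    have h3C : (0:ℝ) < 3 + 2*C := by linarith
    set ε' := ε / (3 + 2*C) with hε'def
    have hε'0 : 0 < ε' := by positivity
    obtain ⟨r, hr0, hrc⟩ := Metric.uniformContinuousOn_iff.1 hu ε' hε'0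
    obtain ⟨δ, hδ0, hδ⟩ := key ε' hε'0 r hr0
    refine ⟨min r δ, lt_min hr0 hδ0, ?_⟩
    intro p hp x hdx
    have hε'ε : ε' ≤ ε := by
      rw [hε'def, div_le_iff₀ h3C]
      nlinarith
    by_cases hx : x ∈ A
    · rw [hfA x hx]
      have := hrc x hx p hp (lt_of_lt_of_le hdx (min_le_left _ _))
      rw [Real.dist_eq] at this
      linarith [this, hε'ε]
    · have h := hδ p hp (fun a ha har => by
        have := hrc a ha p hp har
        rw [Real.dist_eq] at this
        exact this.le) x hx (lt_of_lt_of_le hdx (min_le_right _ _))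
      have heq : (3 + 2*C) * ε' = ε := by
        rw [hε'def]; field_simp
      rw [heq] at h
      exact h
end

section
/- Let (X,d) be a metric space, A ⊆ X a nonempty closed set, and F : Δ → (0,1] a Tietze extender, i.e. (i) F(t,t) → 1 and F(s,t) → 0 (fixed s) as t → 0⁺, (ii) s ↦ F(s,t) decreasing for each t, (iii) F uniformly continuous on {s ≥ t ≥ τ} for each τ > 0. For bounded φ : A → [0,∞), define Ω_F[φ]|A = φ and Ω_F[φ](p) = sup_{a∈A} φ(a)·F(d(a,p), d(p,A)) for p ∉ A. Then: Ω_F[φ] is continuous whenever φ is continuous, and uniformly continuous whenever φ is uniformly continuous. -/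
open Metric Set Filter

set_option maxHeartbeats 1000000 in
/-- Main theorem: for a Tietze extender `F`, the sup-extension `Ω_F[φ]` of a bounded
nonnegative `φ` is continuous whenever `φ` is continuous, and uniformly continuous
whenever `φ` is uniformly continuous. -/
theorem stmt_14 {X : Type*} [MetricSpace X] (A : Set X) (hA : A.Nonempty)
    (hAc : IsClosed A) (F : ℝ → ℝ → ℝ)
    (hFr : ∀ s t : ℝ, t ≤ s → 0 < t → 0 < F s t ∧ F s t ≤ 1)
    (hF1 : Tendsto (fun t : ℝ => F t t) (nhdsWithin 0 (Set.Ioi 0)) (nhds 1))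
    (hF0 : ∀ s : ℝ, 0 < s →
      Tendsto (fun t : ℝ => F s t) (nhdsWithin 0 (Set.Ioi 0)) (nhds 0))
    (hFd : ∀ t : ℝ, 0 < t → AntitoneOn (fun s => F s t) (Set.Ici t))
    (hFu : ∀ τ : ℝ, 0 < τ → UniformContinuousOn (fun q : ℝ × ℝ => F q.1 q.2)
      {q : ℝ × ℝ | q.2 ≤ q.1 ∧ τ ≤ q.2})
    (φ : X → ℝ) (hφ0 : ∀ a ∈ A, 0 ≤ φ a) (hφb : ∃ C : ℝ, ∀ a ∈ A, φ a ≤ C)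
    (f : X → ℝ) (hfA : ∀ a ∈ A, f a = φ a)
    (hf : ∀ p ∉ A, f p = ⨆ a : A, φ a * F (dist (a : X) p) (Metric.infDist p A)) :
    (ContinuousOn φ A → Continuous f) ∧
    (UniformContinuousOn φ A → UniformContinuous f) := by
  haveI : Nonempty A := hA.to_subtype
  obtain ⟨C₀, hC₀⟩ := hφb
  set C : ℝ := max C₀ 0 with hCdef
  have hC : ∀ a ∈ A, φ a ≤ C := fun a ha => (hC₀ a ha).trans (le_max_left _ _)
  have hC0 : (0:ℝ) ≤ C := le_max_right _ _
  have htpos : ∀ p ∉ A, 0 < infDist p A := fun p hp =>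
    (hAc.notMem_iff_infDist_pos hA).mp hp
  have hle : ∀ (p : X) (a : A), infDist p A ≤ dist (a : X) p := by
    intro p a
    rw [dist_comm]
    exact infDist_le_dist_of_mem a.2
  have hFpos : ∀ p ∉ A, ∀ a : A,
      0 < F (dist (a : X) p) (infDist p A) ∧ F (dist (a : X) p) (infDist p A) ≤ 1 :=
    fun p hp a => hFr _ _ (hle p a) (htpos p hp)
  have hterm : ∀ p ∉ A, ∀ a : A,
      0 ≤ φ a * F (dist (a : X) p) (infDist p A) ∧
        φ a * F (dist (a : X) p) (infDist p A) ≤ C := by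
    intro p hp a
    have h1 := hFpos p hp a
    have h2 := hφ0 a a.2
    refine ⟨mul_nonneg h2 h1.1.le, ?_⟩
    calc φ a * F (dist (a : X) p) (infDist p A) ≤ φ a * 1 :=
          mul_le_mul_of_nonneg_left h1.2 h2
      _ = φ a := mul_one _
      _ ≤ C := hC a a.2
  have hbdd : ∀ p, p ∉ A →
      BddAbove (Set.range fun a : A => φ a * F (dist (a : X) p) (infDist p A)) := by
    intro p hp
    refine ⟨C, ?_⟩
    rintro x ⟨a, rfl⟩
    exact (hterm p hp a).2
  -- Boundary estimate: valid for all points with small `infDist`.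
  have NEAR : ∀ ε > (0:ℝ), ∀ r > (0:ℝ), ∃ η > (0:ℝ), η ≤ r ∧ ∀ p, infDist p A < η →
      (∃ a ∈ A, dist a p ≤ 2 * infDist p A ∧ φ a - ε ≤ f p) ∧
      (∀ M, 0 ≤ M → (∀ a ∈ A, dist a p ≤ r → φ a ≤ M) → f p ≤ M + ε) := by
    intro ε hε r hr
    set ε' : ℝ := ε / (C + 1) with hε'def
    have hε' : 0 < ε' := by positivity
    have hCε' : C * ε' ≤ ε := by
      have h1 : C * ε' ≤ (C + 1) * ε' := by nlinarith
      have h2 : (C + 1) * ε' = ε := by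
        rw [hε'def, mul_div_cancel₀]
        positivity
      linarith
    obtain ⟨η₁, hη₁pos, hη₁⟩ := tendsto_nhdsWithin_nhds.mp hF1 (ε' / 2) (by positivity)
    obtain ⟨η₂, hη₂pos, hη₂⟩ := tendsto_nhdsWithin_nhds.mp (hF0 r hr) ε' hε'
    refine ⟨min η₁ (min η₂ r), by positivity,
      (min_le_right _ _).trans (min_le_right _ _), ?_⟩
    intro p hpη
    have htr : infDist p A < r := lt_of_lt_of_le hpη
      ((min_le_right _ _).trans (min_le_right _ _))
    by_cases hp : p ∈ A
    · constructor
      · refine ⟨p, hp, ?_, ?_⟩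
        · rw [dist_self]
          have := infDist_nonneg (s := A) (x := p)
          linarith
        · rw [hfA p hp]; linarith
      · intro M hM0 hMr
        rw [hfA p hp]
        have : φ p ≤ M := hMr p hp (by rw [dist_self]; exact hr.le)
        linarith
    · set t : ℝ := infDist p A with htdef
      have htp : 0 < t := htpos p hp
      have ht1 : t < η₁ := lt_of_lt_of_le hpη (min_le_left _ _)
      have ht2 : t < η₂ := lt_of_lt_of_le hpη ((min_le_right _ _).trans (min_le_left _ _))
      constructor
      · -- lower bound
        have hFtt : |F t t - 1| < ε' / 2 := by
          have := hη₁ (mem_Ioi.mpr htp) (by simpa [Real.dist_eq, abs_of_pos htp] using ht1)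
          simpa [Real.dist_eq] using this
        have hcont : ContinuousWithinAt (fun s : ℝ => F s t) (Ici t) t := by
          have h1 : ContinuousWithinAt (fun q : ℝ × ℝ => F q.1 q.2)
              {q : ℝ × ℝ | q.2 ≤ q.1 ∧ t ≤ q.2} (t, t) :=
            ((hFu t htp).continuousOn) (t, t) ⟨le_refl t, le_refl t⟩
          have h2 : ContinuousWithinAt (fun s : ℝ => ((s, t) : ℝ × ℝ)) (Ici t) t :=
            (continuous_id.prodMk continuous_const).continuousWithinAt
          exact ContinuousWithinAt.comp (f := fun s : ℝ => ((s, t) : ℝ × ℝ)) h1 h2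
            (fun s hs => ⟨hs, le_refl t⟩)
        obtain ⟨δ, hδpos, hδ⟩ := tendsto_nhdsWithin_nhds.mp hcont (ε' / 2) (by positivity)
        set δ' : ℝ := min (δ / 2) t with hδ'def
        have hδ'pos : 0 < δ' := by positivity
        have hlt : infDist p A < t + δ' := by rw [← htdef]; linarith
        obtain ⟨a, haA, hap⟩ := (infDist_lt_iff hA).mp hlt
        have hta : t ≤ dist a p := by
          rw [dist_comm]
          exact infDist_le_dist_of_mem haA
        have hd2t : dist a p ≤ 2 * t := by
          have : δ' ≤ t := min_le_right _ _
          rw [dist_comm] at hap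
          linarith
        have hFa : |F (dist a p) t - F t t| < ε' / 2 := by
          have hmem : dist a p ∈ Ici t := hta
          have hdd : dist (dist a p) t < δ := by
            rw [Real.dist_eq, abs_of_nonneg (by linarith)]
            rw [dist_comm] at hap
            have : δ' ≤ δ / 2 := min_le_left _ _
            linarith
          have := hδ hmem hdd
          simpa [Real.dist_eq] using this
        have hFlb : 1 - ε' ≤ F (dist a p) t := by
          have h1 := abs_lt.mp hFtt
          have h2 := abs_lt.mp hFa
          linarith [h1.1, h2.1]
        refine ⟨a, haA, hd2t, ?_⟩
        have hsup : φ a * F (dist a p) t ≤ f p := by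
          rw [hf p hp]
          exact le_ciSup (hbdd p hp) ⟨a, haA⟩
        have hφa0 := hφ0 a haA
        have hφaC := hC a haA
        have : φ a * (1 - ε') ≤ φ a * F (dist a p) t :=
          mul_le_mul_of_nonneg_left hFlb hφa0
        nlinarith
      · -- upper bound
        intro M hM0 hMr
        rw [hf p hp]
        apply ciSup_le
        intro a
        by_cases hd : dist (a : X) p ≤ r
        · have h1 := hterm p hp a
          have h2 : φ a ≤ M := hMr a a.2 hd
          have h3 := (hFpos p hp a).2
          have h4 := hφ0 a a.2
          nlinarith
        · push_neg at hd
          have htler : t ≤ r := htr.le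
          have hmono : F (dist (a : X) p) t ≤ F r t :=
            hFd t htp (mem_Ici.mpr htler) (mem_Ici.mpr (htler.trans hd.le)) hd.le
          have hFrt : F r t < ε' := by
            have := hη₂ (mem_Ioi.mpr htp) (by simpa [Real.dist_eq, abs_of_pos htp] using ht2)
            rw [Real.dist_eq, sub_zero] at this
            exact (le_abs_self _).trans_lt this
          have h1 := (hFpos p hp a).1
          have h2 := hφ0 a a.2
          have h3 := hC a a.2
          have : φ a * F (dist (a : X) p) t ≤ C * F r t := by nlinarith
          nlinarith
  -- Estimate far from `A`.
  have FAR : ∀ τ > (0:ℝ), ∀ ε > (0:ℝ), ∃ θ > (0:ℝ), ∀ p q : X, τ ≤ infDist p A →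
      τ ≤ infDist q A → dist p q < θ → |f p - f q| ≤ ε := by
    intro τ hτ ε hε
    have hε' : (0:ℝ) < ε / (C + 1) := by positivity
    obtain ⟨θ, hθpos, hθ⟩ := Metric.uniformContinuousOn_iff.mp (hFu τ hτ) (ε / (C + 1)) hε'
    refine ⟨θ, hθpos, ?_⟩
    intro p q hp hq hpq
    have hpA : p ∉ A := by
      intro h; rw [infDist_zero_of_mem h] at hp; linarith
    have hqA : q ∉ A := by
      intro h; rw [infDist_zero_of_mem h] at hq; linarith
    have key : ∀ a : A,
        |F (dist (a : X) p) (infDist p A) - F (dist (a : X) q) (infDist q A)| ≤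
          ε / (C + 1) := by
      intro a
      have hx : ((dist (a : X) p, infDist p A) : ℝ × ℝ) ∈
          {q : ℝ × ℝ | q.2 ≤ q.1 ∧ τ ≤ q.2} := ⟨hle p a, hp⟩
      have hy : ((dist (a : X) q, infDist q A) : ℝ × ℝ) ∈
          {q : ℝ × ℝ | q.2 ≤ q.1 ∧ τ ≤ q.2} := ⟨hle q a, hq⟩
      have hd1 : dist (dist (a : X) p) (dist (a : X) q) ≤ dist p q := by
        rw [Real.dist_eq, dist_comm (a : X) p, dist_comm (a : X) q]
        exact abs_dist_sub_le p q (a : X)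
      have hd2 : dist (infDist p A) (infDist q A) ≤ dist p q := by
        simpa using (lipschitz_infDist_pt A).dist_le_mul p q
      have hdxy : dist ((dist (a : X) p, infDist p A) : ℝ × ℝ)
          (dist (a : X) q, infDist q A) < θ := by
        rw [Prod.dist_eq]
        exact lt_of_le_of_lt (max_le hd1 hd2) hpq
      have := hθ _ hx _ hy hdxy
      rw [Real.dist_eq] at this
      exact this.le
    have hone : ∀ p' q' : X, p' ∉ A → q' ∉ A →
        (∀ a : A, |F (dist (a : X) p') (infDist p' A) - F (dist (a : X) q') (infDist q' A)| ≤
          ε / (C + 1)) → f p' ≤ f q' + ε := by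
      intro p' q' hp'A hq'A hkey
      rw [hf p' hp'A, hf q' hq'A]
      apply ciSup_le
      intro a
      have h1 := hkey a
      have h2 := hφ0 a a.2
      have h3 := hC a a.2
      have habs := abs_le.mp h1
      have hstep : φ a * F (dist (a : X) p') (infDist p' A) ≤
          φ a * F (dist (a : X) q') (infDist q' A) + ε := by
        have : φ a * (ε / (C + 1)) ≤ ε := by
          have h4 : φ a * (ε / (C + 1)) ≤ (C + 1) * (ε / (C + 1)) := by nlinarith
          have h5 : (C + 1) * (ε / (C + 1)) = ε := mul_div_cancel₀ _ (by positivity)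
          linarith
        nlinarith [habs.2]
      refine hstep.trans ?_
      have := le_ciSup (hbdd q' hq'A) a
      linarith
    have key' : ∀ a : A,
        |F (dist (a : X) q) (infDist q A) - F (dist (a : X) p) (infDist p A)| ≤
          ε / (C + 1) := by
      intro a; rw [abs_sub_comm]; exact key a
    have h1 := hone p q hpA hqA key
    have h2 := hone q p hqA hpA key'
    rw [abs_sub_le_iff]
    constructor <;> linarith
  constructor
  · -- continuity
    intro hφc
    rw [continuous_iff_continuousAt]
    intro p
    rw [Metric.continuousAt_iff]
    intro ε hε
    by_cases hp : p ∈ A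
    · -- boundary / interior point of A
      have hc := hφc p hp
      rw [Metric.continuousWithinAt_iff] at hc
      obtain ⟨r, hrpos, hr⟩ := hc (ε / 4) (by positivity)
      obtain ⟨η, hηpos, hηr, hη⟩ := NEAR (ε / 4) (by positivity) (r / 8) (by positivity)
      refine ⟨min η (r / 8), by positivity, ?_⟩
      intro q hq
      have hq1 : dist q p < η := lt_of_lt_of_le hq (min_le_left _ _)
      have hq2 : dist q p < r / 8 := lt_of_lt_of_le hq (min_le_right _ _)
      have htq : infDist q A < η :=
        lt_of_le_of_lt (infDist_le_dist_of_mem hp) hq1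
      obtain ⟨hlow, hup⟩ := hη q htq
      obtain ⟨a, haA, had, hafq⟩ := hlow
      have htqr : infDist q A < r / 8 := lt_of_lt_of_le htq hηr
      have hap : dist a p < r := by
        have := dist_triangle a q p
        linarith
      have hφa : |φ a - φ p| < ε / 4 := by
        have := hr haA hap
        rwa [Real.dist_eq] at this
      have hlow' : φ p - ε / 2 ≤ f q := by
        have := (abs_lt.mp hφa).1
        linarith
      have hup' : f q ≤ φ p + ε / 2 := by
        have := hup (φ p + ε / 4) (by have := hφ0 p hp; linarith) ?_
        · linarith
        · intro a' ha'A ha'd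
          have hd : dist a' p < r := by
            have := dist_triangle a' q p
            linarith
          have := (abs_lt.mp (by rw [← Real.dist_eq]; exact hr ha'A hd)).2
          linarith
      rw [hfA p hp, Real.dist_eq]
      have : |f q - φ p| ≤ ε / 2 := abs_sub_le_iff.mpr ⟨by linarith, by linarith⟩
      linarith
    · -- point outside A
      have htp := htpos p hp
      obtain ⟨θ, hθpos, hθ⟩ := FAR (infDist p A / 2) (by positivity) (ε / 2) (by positivity)
      refine ⟨min θ (infDist p A / 2), by positivity, ?_⟩
      intro q hq
      have hq1 : dist q p < θ := lt_of_lt_of_le hq (min_le_left _ _)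
      have hq2 : dist q p < infDist p A / 2 := lt_of_lt_of_le hq (min_le_right _ _)
      have htq : infDist p A / 2 ≤ infDist q A := by
        have h := infDist_le_infDist_add_dist (x := p) (y := q) (s := A)
        rw [dist_comm] at h
        linarith
      have := hθ q p htq (by linarith) hq1
      rw [Real.dist_eq]
      calc |f q - f p| ≤ ε / 2 := this
        _ < ε := by linarith
  · -- uniform continuity
    intro hφu
    rw [Metric.uniformContinuous_iff]
    intro ε hε
    rw [Metric.uniformContinuousOn_iff] at hφu
    obtain ⟨r, hrpos, hr⟩ := hφu (ε / 5) (by positivity)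
    obtain ⟨η, hηpos, hηr, hη⟩ := NEAR (ε / 5) (by positivity) (r / 8) (by positivity)
    obtain ⟨θ, hθpos, hθ⟩ := FAR (η / 4) (by positivity) (ε / 2) (by positivity)
    refine ⟨min θ (η / 4), by positivity, ?_⟩
    intro p q hpq
    have hpq1 : dist p q < θ := lt_of_lt_of_le hpq (min_le_left _ _)
    have hpq2 : dist p q < η / 4 := lt_of_lt_of_le hpq (min_le_right _ _)
    by_cases hcase : infDist p A < η / 2
    · -- near case
      have htq : infDist q A < η := by
        have h := infDist_le_infDist_add_dist (x := q) (y := p) (s := A)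
        rw [dist_comm] at h
        linarith
      have htp' : infDist p A < η := by linarith
      obtain ⟨hlowp, hupp⟩ := hη p htp'
      obtain ⟨hlowq, hupq⟩ := hη q htq
      obtain ⟨ap, hapA, hapd, hapf⟩ := hlowp
      obtain ⟨aq, haqA, haqd, haqf⟩ := hlowq
      have haa : dist ap aq < r := by
        have h1 : dist ap aq ≤ dist ap p + dist p aq := dist_triangle _ _ _
        have h2 : dist p aq ≤ dist p q + dist q aq := dist_triangle _ _ _
        have h3 : dist q aq = dist aq q := dist_comm _ _
        linarith
      have hφaa : |φ ap - φ aq| < ε / 5 := by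
        have := hr ap hapA aq haqA haa
        rwa [Real.dist_eq] at this
      have hMnn : (0:ℝ) ≤ φ aq + ε / 5 := by
        have := hφ0 aq haqA
        linarith
      have hMp : ∀ a' ∈ A, dist a' p ≤ r / 8 → φ a' ≤ φ aq + ε / 5 := by
        intro a' ha'A ha'd
        have h1 : dist a' aq ≤ dist a' p + dist p aq := dist_triangle _ _ _
        have h2 : dist p aq ≤ dist p q + dist q aq := dist_triangle _ _ _
        have h3 : dist q aq = dist aq q := dist_comm _ _
        have hlt : dist a' aq < r := by linarith
        have h4 := hr a' ha'A aq haqA hlt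
        rw [Real.dist_eq] at h4
        linarith [(abs_lt.mp h4).2]
      have hMq : ∀ a' ∈ A, dist a' q ≤ r / 8 → φ a' ≤ φ aq + ε / 5 := by
        intro a' ha'A ha'd
        have h1 : dist a' aq ≤ dist a' q + dist q aq := dist_triangle _ _ _
        have h3 : dist q aq = dist aq q := dist_comm _ _
        have hlt : dist a' aq < r := by linarith
        have h4 := hr a' ha'A aq haqA hlt
        rw [Real.dist_eq] at h4
        linarith [(abs_lt.mp h4).2]
      have hupp' : f p ≤ φ aq + 2 * (ε / 5) := by
        have h := hupp (φ aq + ε / 5) hMnn hMp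
        linarith
      have hupq' : f q ≤ φ aq + 2 * (ε / 5) := by
        have h := hupq (φ aq + ε / 5) hMnn hMq
        linarith
      have hlowp' : φ aq - 2 * (ε / 5) ≤ f p := by
        have := (abs_lt.mp hφaa).1
        linarith
      rw [Real.dist_eq]
      have : |f p - f q| ≤ 4 * (ε / 5) := abs_sub_le_iff.mpr ⟨by linarith, by linarith⟩
      linarith
    · -- far case
      have htq : η / 4 ≤ infDist q A := by
        have h := infDist_le_infDist_add_dist (x := p) (y := q) (s := A)
        linarith
      have := hθ p q (by linarith) htq hpq1
      rw [Real.dist_eq]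
      calc |f p - f q| ≤ ε / 2 := this
        _ < ε := by linarith
end

section
/- Let (X,d) be a metric space, A ⊆ X nonempty closed, F : Δ → (0,1] any function, and Ω_F the map on bounded nonnegative functions defined by Ω_F[φ]|A = φ and Ω_F[φ](p) = sup_{a∈A} φ(a)·F(d(a,p),d(p,A)) for p ∉ A. Then Ω_F is sublinear and an isotone isometry on the positive cone: (a) Ω_F[φ+ψ] ≤ Ω_F[φ] + Ω_F[ψ] pointwise; (b) Ω_F[λφ] = λΩ_F[φ] for λ ≥ 0; (c) φ ≤ ψ implies Ω_F[φ] ≤ Ω_F[ψ]; (d) sup_X |Ω_F[φ] − Ω_F[ψ]| = sup_A |φ − ψ| for all bounded φ, ψ : A → [0,∞). -/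
open Metric Set
open scoped Classical

/-- The sup-extension operator `Ω_F`. -/
noncomputable def omegaExt {X : Type*} [MetricSpace X] (F : ℝ → ℝ → ℝ) (A : Set X)
    (φ : X → ℝ) : X → ℝ := fun p =>
  if p ∈ A then φ p
  else ⨆ a : A, φ a * F (dist (a : X) p) (Metric.infDist p A)

/-- `Ω_F` is sublinear and an isotone isometry on the positive cone of bounded
nonnegative functions. -/
theorem stmt_15 {X : Type*} [MetricSpace X] (A : Set X) (hA : A.Nonempty)
    (hAc : IsClosed A) (F : ℝ → ℝ → ℝ)
    (hFr : ∀ s t : ℝ, t ≤ s → 0 < t → 0 < F s t ∧ F s t ≤ 1)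
    (φ ψ : X → ℝ)
    (hφ0 : ∀ a ∈ A, 0 ≤ φ a) (hφb : ∃ C : ℝ, ∀ a ∈ A, φ a ≤ C)
    (hψ0 : ∀ a ∈ A, 0 ≤ ψ a) (hψb : ∃ C : ℝ, ∀ a ∈ A, ψ a ≤ C) :
    (∀ x : X, omegaExt F A (fun a => φ a + ψ a) x ≤
        omegaExt F A φ x + omegaExt F A ψ x) ∧
    (∀ lam : ℝ, 0 ≤ lam → ∀ x : X,
        omegaExt F A (fun a => lam * φ a) x = lam * omegaExt F A φ x) ∧
    ((∀ a ∈ A, φ a ≤ ψ a) → ∀ x : X, omegaExt F A φ x ≤ omegaExt F A ψ x) ∧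
    (⨆ x : X, |omegaExt F A φ x - omegaExt F A ψ x|) = ⨆ a : A, |φ a - ψ a| := by
  obtain ⟨a₀, ha₀⟩ := hA
  haveI : Nonempty A := ⟨⟨a₀, ha₀⟩⟩
  haveI : Nonempty X := ⟨a₀⟩
  obtain ⟨C, hC⟩ := hφb
  obtain ⟨D, hD⟩ := hψb
  -- properties of F at relevant arguments
  have hF : ∀ x : X, x ∉ A → ∀ a : A,
      0 < F (dist (a : X) x) (infDist x A) ∧ F (dist (a : X) x) (infDist x A) ≤ 1 := by
    intro x hx a
    have ht : 0 < infDist x A :=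
      (hAc.notMem_iff_infDist_pos ⟨a₀, ha₀⟩).1 hx
    refine hFr _ _ ?_ ht
    rw [dist_comm]
    exact infDist_le_dist_of_mem a.2
  -- boundedness of the families
  have hbdd : ∀ (χ : X → ℝ) (E : ℝ), (∀ a ∈ A, 0 ≤ χ a) → (∀ a ∈ A, χ a ≤ E) →
      ∀ x : X, x ∉ A →
      BddAbove (Set.range fun a : A => χ a * F (dist (a : X) x) (infDist x A)) := by
    intro χ E h0 hE x hx
    refine ⟨E, ?_⟩
    rintro _ ⟨a, rfl⟩
    have := (hF x hx a)
    calc χ a * F (dist (a : X) x) (infDist x A) ≤ χ a * 1 :=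
          mul_le_mul_of_nonneg_left this.2 (h0 a a.2)
      _ = χ a := mul_one _
      _ ≤ E := hE a a.2
  have hbφ := hbdd φ C hφ0 hC
  have hbψ := hbdd ψ D hψ0 hD
  -- the sup over A of |φ - ψ|
  set M : ℝ := ⨆ a : A, |φ a - ψ a| with hM
  have hMbdd : BddAbove (Set.range fun a : A => |φ a - ψ a|) := by
    refine ⟨C + D, ?_⟩
    rintro _ ⟨a, rfl⟩
    have h1 := hφ0 a a.2; have h2 := hψ0 a a.2
    have h3 := hC a a.2; have h4 := hD a a.2
    rw [abs_sub_le_iff]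
    constructor <;> linarith
  have hle : ∀ a : A, |φ a - ψ a| ≤ M := fun a => le_ciSup hMbdd a
  have hM0 : 0 ≤ M := le_trans (abs_nonneg _) (hle ⟨a₀, ha₀⟩)
  refine ⟨?_, ?_, ?_, ?_⟩
  · -- sublinearity
    intro x
    by_cases hx : x ∈ A
    · simp [omegaExt, hx]
    · simp only [omegaExt, if_neg hx]
      refine ciSup_le fun a => ?_
      rw [add_mul]
      exact add_le_add (le_ciSup (hbφ x hx) a) (le_ciSup (hbψ x hx) a)
  · -- positive homogeneity
    intro lam hlam x
    by_cases hx : x ∈ A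
    · simp [omegaExt, hx]
    · simp only [omegaExt, if_neg hx]
      rw [Real.mul_iSup_of_nonneg hlam]
      exact iSup_congr fun a => mul_assoc _ _ _
  · -- monotonicity
    intro hφψ x
    by_cases hx : x ∈ A
    · simp only [omegaExt, if_pos hx]; exact hφψ x hx
    · simp only [omegaExt, if_neg hx]
      refine ciSup_le fun a => ?_
      refine le_trans ?_ (le_ciSup (hbψ x hx) a)
      exact mul_le_mul_of_nonneg_right (hφψ a a.2) (hF x hx a).1.le
  · -- isometry
    have key : ∀ x : X, |omegaExt F A φ x - omegaExt F A ψ x| ≤ M := by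
      intro x
      by_cases hx : x ∈ A
      · simp only [omegaExt, if_pos hx]
        exact hle ⟨x, hx⟩
      · simp only [omegaExt, if_neg hx]
        rw [abs_sub_le_iff]
        have main : ∀ (χ₁ χ₂ : X → ℝ), (∀ a ∈ A, 0 ≤ χ₂ a) →
            BddAbove (Set.range fun a : A => χ₁ a * F (dist (a : X) x) (infDist x A)) →
            BddAbove (Set.range fun a : A => χ₂ a * F (dist (a : X) x) (infDist x A)) →
            (∀ a : A, χ₁ a - χ₂ a ≤ M) →
            (⨆ a : A, χ₁ a * F (dist (a : X) x) (infDist x A)) -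
              (⨆ a : A, χ₂ a * F (dist (a : X) x) (infDist x A)) ≤ M := by
          intro χ₁ χ₂ h0 hb1 hb2 hdiff
          rw [sub_le_iff_le_add]
          refine ciSup_le fun a => ?_
          have hFa := hF x hx a
          have h1 : χ₁ a * F (dist (a : X) x) (infDist x A) ≤
              χ₂ a * F (dist (a : X) x) (infDist x A) + M := by
            have : χ₁ a ≤ χ₂ a + M := by linarith [hdiff a]
            have h2 : χ₁ a * F (dist (a : X) x) (infDist x A) ≤
                (χ₂ a + M) * F (dist (a : X) x) (infDist x A) :=
              mul_le_mul_of_nonneg_right this hFa.1.le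
            have h3 : M * F (dist (a : X) x) (infDist x A) ≤ M :=
              mul_le_of_le_one_right hM0 hFa.2
            rw [add_mul] at h2
            linarith
          exact h1.trans (by linarith [le_ciSup hb2 a])
        constructor
        · exact main φ ψ hψ0 (hbφ x hx) (hbψ x hx)
            (fun a => (le_abs_self _).trans (hle a))
        · refine main ψ φ hφ0 (hbψ x hx) (hbφ x hx) fun a => ?_
          refine le_trans ?_ (hle a)
          rw [abs_sub_comm]
          exact le_abs_self _
    have hbX : BddAbove (Set.range fun x : X => |omegaExt F A φ x - omegaExt F A ψ x|) :=
      ⟨M, by rintro _ ⟨x, rfl⟩; exact key x⟩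
    refine le_antisymm (ciSup_le key) (ciSup_le fun a => ?_)
    have : |φ a - ψ a| = |omegaExt F A φ a - omegaExt F A ψ a| := by
      simp [omegaExt, a.2]
    rw [this]
    exact le_ciSup hbX (a : X)
end

section
/- Let (X,d) be a metric space, A ⊆ X nonempty closed, F : Δ → (0,1] a Tietze extender, and define Θ_F on bounded real functions φ : A → ℝ by Θ_F[φ] = Ω_F[φ⁺] − Ω_F[φ⁻], where φ⁺ = max(φ,0), φ⁻ = max(−φ,0), and Ω_F is the sup-extension Ω_F[ψ](p) = sup_{a∈A} ψ(a)·F(d(a,p),d(p,A)) for p ∉ A, Ω_F[ψ]|A = ψ. Then Θ_F is an extension operator (Θ_F[φ]|A = φ), is positively homogeneous, preserves the sup-norm (sup_X |Θ_F[φ]| = sup_A |φ|), is 2-Lipschitz (sup_X |Θ_F[φ]−Θ_F[ψ]| ≤ 2 sup_A |φ−ψ|), and Θ_F[φ] is uniformly continuous whenever φ is bounded and uniformly continuous. -/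
open Metric Set Filter
open scoped Classical

/-- The extension operator `Θ_F[φ] = Ω_F[φ⁺] − Ω_F[φ⁻]`. -/
noncomputable def thetaExt {X : Type*} [MetricSpace X] (F : ℝ → ℝ → ℝ) (A : Set X)
    (φ : X → ℝ) : X → ℝ := fun x =>
  omegaExt F A (fun a => max (φ a) 0) x - omegaExt F A (fun a => max (-φ a) 0) x

section Aux

variable {X : Type*} [MetricSpace X] {A : Set X} {F : ℝ → ℝ → ℝ}

lemma omegaExt_of_mem {φ : X → ℝ} {p : X} (hp : p ∈ A) : omegaExt F A φ p = φ p :=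
  if_pos hp

lemma omegaExt_of_notMem {φ : X → ℝ} {p : X} (hp : p ∉ A) :
    omegaExt F A φ p = ⨆ a : A, φ a * F (dist (a : X) p) (Metric.infDist p A) :=
  if_neg hp

lemma infDist_pos_of_notMem (hA : A.Nonempty) (hAc : IsClosed A) {p : X} (hp : p ∉ A) :
    0 < infDist p A :=
  (hAc.notMem_iff_infDist_pos hA).1 hp

lemma F_term_bounds (hA : A.Nonempty) (hAc : IsClosed A)
    (hFr : ∀ s t : ℝ, t ≤ s → 0 < t → 0 < F s t ∧ F s t ≤ 1)
    {p : X} (hp : p ∉ A) {a : X} (ha : a ∈ A) :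
    0 < F (dist a p) (infDist p A) ∧ F (dist a p) (infDist p A) ≤ 1 := by
  refine hFr _ _ ?_ (infDist_pos_of_notMem hA hAc hp)
  rw [dist_comm]
  exact infDist_le_dist_of_mem ha

lemma term_nonneg (hA : A.Nonempty) (hAc : IsClosed A)
    (hFr : ∀ s t : ℝ, t ≤ s → 0 < t → 0 < F s t ∧ F s t ≤ 1)
    {ψ : X → ℝ} (h0 : ∀ a ∈ A, 0 ≤ ψ a) {p : X} (hp : p ∉ A) (a : A) :
    0 ≤ ψ a * F (dist (a : X) p) (infDist p A) :=
  mul_nonneg (h0 a a.2) (F_term_bounds hA hAc hFr hp a.2).1.le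

lemma term_le (hA : A.Nonempty) (hAc : IsClosed A)
    (hFr : ∀ s t : ℝ, t ≤ s → 0 < t → 0 < F s t ∧ F s t ≤ 1)
    {ψ : X → ℝ} {M : ℝ} (h0 : ∀ a ∈ A, 0 ≤ ψ a) (hM : ∀ a ∈ A, ψ a ≤ M)
    {p : X} (hp : p ∉ A) (a : A) :
    ψ a * F (dist (a : X) p) (infDist p A) ≤ M :=
  le_trans (mul_le_of_le_one_right (h0 a a.2) (F_term_bounds hA hAc hFr hp a.2).2) (hM a a.2)

lemma term_bddAbove (hA : A.Nonempty) (hAc : IsClosed A)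
    (hFr : ∀ s t : ℝ, t ≤ s → 0 < t → 0 < F s t ∧ F s t ≤ 1)
    {ψ : X → ℝ} {M : ℝ} (h0 : ∀ a ∈ A, 0 ≤ ψ a) (hM : ∀ a ∈ A, ψ a ≤ M)
    {p : X} (hp : p ∉ A) :
    BddAbove (Set.range fun a : A => ψ a * F (dist (a : X) p) (infDist p A)) := by
  refine ⟨M, ?_⟩
  rintro x ⟨a, rfl⟩
  exact term_le hA hAc hFr h0 hM hp a

lemma omega_nonneg (hA : A.Nonempty) (hAc : IsClosed A)
    (hFr : ∀ s t : ℝ, t ≤ s → 0 < t → 0 < F s t ∧ F s t ≤ 1)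
    {ψ : X → ℝ} (h0 : ∀ a ∈ A, 0 ≤ ψ a) (p : X) :
    0 ≤ omegaExt F A ψ p := by
  by_cases hp : p ∈ A
  · rw [omegaExt_of_mem hp]; exact h0 p hp
  · rw [omegaExt_of_notMem hp]
    exact Real.iSup_nonneg (term_nonneg hA hAc hFr h0 hp)

lemma omega_le (hA : A.Nonempty) (hAc : IsClosed A)
    (hFr : ∀ s t : ℝ, t ≤ s → 0 < t → 0 < F s t ∧ F s t ≤ 1)
    {ψ : X → ℝ} {M : ℝ} (h0 : ∀ a ∈ A, 0 ≤ ψ a) (hM : ∀ a ∈ A, ψ a ≤ M) (p : X) :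
    omegaExt F A ψ p ≤ M := by
  have hM0 : 0 ≤ M := le_trans (h0 hA.choose hA.choose_spec) (hM hA.choose hA.choose_spec)
  by_cases hp : p ∈ A
  · rw [omegaExt_of_mem hp]; exact hM p hp
  · rw [omegaExt_of_notMem hp]
    exact Real.iSup_le (term_le hA hAc hFr h0 hM hp) hM0

lemma le_omega (hA : A.Nonempty) (hAc : IsClosed A)
    (hFr : ∀ s t : ℝ, t ≤ s → 0 < t → 0 < F s t ∧ F s t ≤ 1)
    {ψ : X → ℝ} {M : ℝ} (h0 : ∀ a ∈ A, 0 ≤ ψ a) (hM : ∀ a ∈ A, ψ a ≤ M)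
    {p : X} (hp : p ∉ A) (a : A) :
    ψ a * F (dist (a : X) p) (infDist p A) ≤ omegaExt F A ψ p := by
  rw [omegaExt_of_notMem hp]
  exact le_ciSup (term_bddAbove hA hAc hFr h0 hM hp) a

/-- Core comparison: if `ψ₁ - ψ₂ ≤ D` on `A` then `Ω ψ₁ - Ω ψ₂ ≤ D` everywhere. -/
lemma omega_sub_le (hA : A.Nonempty) (hAc : IsClosed A)
    (hFr : ∀ s t : ℝ, t ≤ s → 0 < t → 0 < F s t ∧ F s t ≤ 1)
    {ψ₁ ψ₂ : X → ℝ} {M₂ D : ℝ}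
    (h01 : ∀ a ∈ A, 0 ≤ ψ₁ a) (h02 : ∀ a ∈ A, 0 ≤ ψ₂ a) (hM2 : ∀ a ∈ A, ψ₂ a ≤ M₂)
    (hD : ∀ a ∈ A, ψ₁ a - ψ₂ a ≤ D) (hD0 : 0 ≤ D) (p : X) :
    omegaExt F A ψ₁ p - omegaExt F A ψ₂ p ≤ D := by
  by_cases hp : p ∈ A
  · rw [omegaExt_of_mem hp, omegaExt_of_mem hp]; exact hD p hp
  · rw [sub_le_iff_le_add, omegaExt_of_notMem hp]
    have h2 : 0 ≤ omegaExt F A ψ₂ p := omega_nonneg hA hAc hFr h02 p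
    refine Real.iSup_le (fun a => ?_) (by linarith)
    have hFb := F_term_bounds hA hAc hFr hp a.2
    have h1 : ψ₁ a * F (dist (a : X) p) (infDist p A)
        ≤ ψ₂ a * F (dist (a : X) p) (infDist p A) + D := by
      have : ψ₁ a ≤ ψ₂ a + D := by have := hD a a.2; linarith
      have h3 : ψ₁ a * F (dist (a : X) p) (infDist p A)
          ≤ (ψ₂ a + D) * F (dist (a : X) p) (infDist p A) :=
        mul_le_mul_of_nonneg_right this hFb.1.le
      have h4 : D * F (dist (a : X) p) (infDist p A) ≤ D :=
        mul_le_of_le_one_right hD0 hFb.2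
      nlinarith
    have h5 := le_omega hA hAc hFr h02 hM2 hp a
    linarith

/-- Claim A: near `A`, `Ω ψ` is close to the values of `ψ` at nearby points of `A`. -/
lemma claimA (hA : A.Nonempty) (hAc : IsClosed A)
    (hFr : ∀ s t : ℝ, t ≤ s → 0 < t → 0 < F s t ∧ F s t ≤ 1)
    (hF1 : Tendsto (fun t : ℝ => F t t) (nhdsWithin 0 (Set.Ioi 0)) (nhds 1))
    (hF0 : ∀ s : ℝ, 0 < s →
      Tendsto (fun t : ℝ => F s t) (nhdsWithin 0 (Set.Ioi 0)) (nhds 0))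
    (hFd : ∀ t : ℝ, 0 < t → AntitoneOn (fun s => F s t) (Set.Ici t))
    (hFu : ∀ τ : ℝ, 0 < τ → UniformContinuousOn (fun q : ℝ × ℝ => F q.1 q.2)
      {q : ℝ × ℝ | q.2 ≤ q.1 ∧ τ ≤ q.2})
    {ψ : X → ℝ} {M : ℝ} (h0 : ∀ a ∈ A, 0 ≤ ψ a) (hM : ∀ a ∈ A, ψ a ≤ M)
    (hUC : UniformContinuousOn ψ A) {ε : ℝ} (hε : 0 < ε) :
    ∃ δ > 0, ∀ p : X, infDist p A ≤ δ → ∀ b ∈ A, dist b p ≤ 3 * infDist p A →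
      |omegaExt F A ψ p - ψ b| ≤ ε := by
  have hM0 : 0 ≤ M := le_trans (h0 hA.choose hA.choose_spec) (hM hA.choose hA.choose_spec)
  set c : ℝ := ε / (3 * (M + 1)) with hc_def
  have hc : 0 < c := div_pos hε (by linarith)
  have hM1 : (3:ℝ) * (M + 1) ≠ 0 := by positivity
  have hMc : M * c ≤ ε / 3 := by
    have h1 : (M + 1) * c = ε / 3 := by
      rw [hc_def]; field_simp
    nlinarith
  -- modulus of uniform continuity of ψ
  obtain ⟨δ0, hδ0, hψδ⟩ := Metric.uniformContinuousOn_iff.1 hUC (ε / 3) (by linarith)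
  -- F t t close to 1
  obtain ⟨δ1, hδ1, hF1'⟩ := Metric.tendsto_nhdsWithin_nhds.1 hF1 c hc
  -- F (δ0/2) t close to 0
  obtain ⟨δ2, hδ2, hF0'⟩ := Metric.tendsto_nhdsWithin_nhds.1 (hF0 (δ0 / 2) (by linarith)) c hc
  refine ⟨min (min (δ0 / 6) (δ1 / 2)) (min (δ2 / 2) (δ0 / 2)), by positivity, ?_⟩
  intro p hpδ b hb hb3
  set δ := min (min (δ0 / 6) (δ1 / 2)) (min (δ2 / 2) (δ0 / 2)) with hδ_def
  set t := infDist p A with ht_def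
  by_cases hp : p ∈ A
  · have ht0 : t = 0 := infDist_zero_of_mem hp
    have : dist b p ≤ 0 := by rw [ht0] at hb3; linarith
    have hbp : b = p := by
      have := dist_le_zero.1 this; exact this
    rw [omegaExt_of_mem hp, hbp]
    simp [abs_nonneg, hε.le]
  · have ht : 0 < t := infDist_pos_of_notMem hA hAc hp
    have htδ0 : t ≤ δ0 / 6 := le_trans hpδ (le_trans (min_le_left _ _) (min_le_left _ _))
    have htδ1 : t ≤ δ1 / 2 := le_trans hpδ (le_trans (min_le_left _ _) (min_le_right _ _))
    have htδ2 : t ≤ δ2 / 2 := le_trans hpδ (le_trans (min_le_right _ _) (min_le_left _ _))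
    have htr0 : t ≤ δ0 / 2 := le_trans hpδ (le_trans (min_le_right _ _) (min_le_right _ _))
    have hψb0 : 0 ≤ ψ b := h0 b hb
    -- Upper bound
    have hupper : omegaExt F A ψ p ≤ ψ b + ε := by
      rw [omegaExt_of_notMem hp]
      refine Real.iSup_le (fun a => ?_) (by linarith)
      have hFb := F_term_bounds hA hAc hFr hp a.2
      by_cases hcase : dist (a : X) p < δ0 / 2
      · -- near point
        have hab : dist (a : X) b < δ0 := by
          have h1 : dist (a : X) b ≤ dist (a : X) p + dist p b := dist_triangle _ _ _
          have h2 : dist p b ≤ 3 * t := by rw [dist_comm]; exact hb3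
          have : 3 * t ≤ δ0 / 2 := by linarith
          linarith
        have hψab : |ψ (a : X) - ψ b| < ε / 3 := by
          have := hψδ (a : X) a.2 b hb hab
          rwa [Real.dist_eq] at this
        have h1 : ψ (a : X) * F (dist (a : X) p) (infDist p A) ≤ ψ (a : X) :=
          mul_le_of_le_one_right (h0 a a.2) hFb.2
        have h2 : ψ (a : X) ≤ ψ b + ε / 3 := by
          have := abs_lt.1 hψab; linarith
        rw [← ht_def]
        linarith
      · -- far point
        push_neg at hcase
        have hts : t ≤ dist (a : X) p := by
          rw [dist_comm]; exact infDist_le_dist_of_mem a.2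
        have hanti : F (dist (a : X) p) t ≤ F (δ0 / 2) t := by
          refine hFd t ht ?_ ?_ hcase
          · exact mem_Ici.2 htr0
          · exact mem_Ici.2 hts
        have hF0val : F (δ0 / 2) t < c := by
          have := hF0' (mem_Ioi.2 ht) (by
            rw [Real.dist_eq, sub_zero, abs_of_pos ht]; linarith)
          rw [Real.dist_eq, sub_zero] at this
          exact lt_of_le_of_lt (le_abs_self _) this
        have h1 : ψ (a : X) * F (dist (a : X) p) t ≤ M * F (dist (a : X) p) t :=
          mul_le_mul_of_nonneg_right (hM a a.2) (by rw [ht_def] at *; exact hFb.1.le)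
        have h2 : M * F (dist (a : X) p) t ≤ M * F (δ0 / 2) t :=
          mul_le_mul_of_nonneg_left hanti hM0
        have h3 : M * F (δ0 / 2) t ≤ M * c := mul_le_mul_of_nonneg_left hF0val.le hM0
        rw [← ht_def]
        linarith
    -- Lower bound
    have hlower : ψ b - ε ≤ omegaExt F A ψ p := by
      obtain ⟨δF, hδF, hFuδ⟩ :=
        Metric.uniformContinuousOn_iff.1 (hFu t ht) c hc
      set η := min (δF / 2) t with hη_def
      have hη : 0 < η := lt_min (by linarith) ht
      obtain ⟨a, ha, hap⟩ := (infDist_lt_iff hA).1 (show infDist p A < t + η by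
        rw [← ht_def]; linarith)
      set s := dist a p with hs_def
      have hsp : s = dist p a := dist_comm a p
      have hts : t ≤ s := by rw [hs_def, dist_comm]; exact infDist_le_dist_of_mem ha
      have hsη : s < t + η := by rw [hsp]; exact hap
      -- F s t is close to F t t
      have hmem1 : (s, t) ∈ {q : ℝ × ℝ | q.2 ≤ q.1 ∧ t ≤ q.2} := ⟨hts, le_refl t⟩
      have hmem2 : (t, t) ∈ {q : ℝ × ℝ | q.2 ≤ q.1 ∧ t ≤ q.2} := ⟨le_refl t, le_refl t⟩
      have hdist : dist ((s, t) : ℝ × ℝ) (t, t) < δF := by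
        rw [Prod.dist_eq]
        simp only [Real.dist_eq, sub_self, abs_zero]
        rw [max_eq_left (abs_nonneg _)]
        rw [abs_of_nonneg (by linarith)]
        have : η ≤ δF / 2 := min_le_left _ _
        linarith
      have hFst : |F s t - F t t| < c := by
        have := hFuδ (s, t) hmem1 (t, t) hmem2 hdist
        rwa [Real.dist_eq] at this
      have hFtt : |F t t - 1| < c := by
        have := hF1' (mem_Ioi.2 ht) (by
          rw [Real.dist_eq, sub_zero, abs_of_pos ht]; linarith)
        rwa [Real.dist_eq] at this
      have hFst_low : 1 - 2 * c ≤ F s t := by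
        have h1 := abs_lt.1 hFst
        have h2 := abs_lt.1 hFtt
        linarith
      -- ψ a is close to ψ b
      have hab : dist a b < δ0 := by
        have h1 : dist a b ≤ dist a p + dist p b := dist_triangle _ _ _
        have h2 : dist p b ≤ 3 * t := by rw [dist_comm]; exact hb3
        have h3 : η ≤ t := min_le_right _ _
        have : dist a p < 2 * t := by rw [← hs_def]; linarith
        linarith
      have hψab : |ψ a - ψ b| < ε / 3 := by
        have := hψδ a ha b hb hab
        rwa [Real.dist_eq] at this
      have hterm : ψ a * F s t ≤ omegaExt F A ψ p := by
        have := le_omega hA hAc hFr h0 hM hp ⟨a, ha⟩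
        rw [← ht_def] at this
        exact this
      have hψa0 : 0 ≤ ψ a := h0 a ha
      have hψaM : ψ a ≤ M := hM a ha
      have h1 : ψ a * (1 - 2 * c) ≤ ψ a * F s t :=
        mul_le_mul_of_nonneg_left hFst_low hψa0
      have h2 : ψ a - 2 * (M * c) ≤ ψ a * (1 - 2 * c) := by nlinarith
      have h3 : ψ b - ε / 3 ≤ ψ a := by
        have := abs_lt.1 hψab; linarith
      linarith
    rw [abs_sub_le_iff]
    constructor <;> linarith

/-- Claim B: `Ω ψ` is uniformly continuous far from `A`. -/
lemma claimB (hA : A.Nonempty) (hAc : IsClosed A)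
    (hFr : ∀ s t : ℝ, t ≤ s → 0 < t → 0 < F s t ∧ F s t ≤ 1)
    (hFu : ∀ τ : ℝ, 0 < τ → UniformContinuousOn (fun q : ℝ × ℝ => F q.1 q.2)
      {q : ℝ × ℝ | q.2 ≤ q.1 ∧ τ ≤ q.2})
    {ψ : X → ℝ} {M : ℝ} (h0 : ∀ a ∈ A, 0 ≤ ψ a) (hM : ∀ a ∈ A, ψ a ≤ M)
    {τ : ℝ} (hτ : 0 < τ) {ε : ℝ} (hε : 0 < ε) :
    ∃ η > 0, ∀ p q : X, τ ≤ infDist p A → τ ≤ infDist q A → dist p q ≤ η →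
      |omegaExt F A ψ p - omegaExt F A ψ q| ≤ ε := by
  have hM0 : 0 ≤ M := le_trans (h0 hA.choose hA.choose_spec) (hM hA.choose hA.choose_spec)
  set c : ℝ := ε / (M + 1) with hc_def
  have hc : 0 < c := div_pos hε (by linarith)
  have hMc : M * c ≤ ε := by
    rw [hc_def, ← sub_nonneg]
    have : M * (ε / (M + 1)) = ε * (M / (M + 1)) := by ring
    rw [this]
    have h1 : M / (M + 1) ≤ 1 := by
      rw [div_le_one (by linarith)]; linarith
    nlinarith
  obtain ⟨δF, hδF, hFuδ⟩ := Metric.uniformContinuousOn_iff.1 (hFu τ hτ) c hc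
  refine ⟨δF / 2, by linarith, ?_⟩
  have key : ∀ p q : X, τ ≤ infDist p A → τ ≤ infDist q A → dist p q ≤ δF / 2 →
      omegaExt F A ψ p - omegaExt F A ψ q ≤ ε := by
    intro p q hpτ hqτ hpq
    have hp : p ∉ A := fun h => by
      rw [infDist_zero_of_mem h] at hpτ; linarith
    have hq : q ∉ A := fun h => by
      rw [infDist_zero_of_mem h] at hqτ; linarith
    rw [sub_le_iff_le_add, omegaExt_of_notMem hp]
    have hq0 : 0 ≤ omegaExt F A ψ q := omega_nonneg hA hAc hFr h0 q
    refine Real.iSup_le (fun a => ?_) (by linarith)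
    have hmem1 : ((dist (a : X) p, infDist p A) : ℝ × ℝ)
        ∈ {r : ℝ × ℝ | r.2 ≤ r.1 ∧ τ ≤ r.2} := by
      refine ⟨?_, hpτ⟩
      rw [dist_comm]; exact infDist_le_dist_of_mem a.2
    have hmem2 : ((dist (a : X) q, infDist q A) : ℝ × ℝ)
        ∈ {r : ℝ × ℝ | r.2 ≤ r.1 ∧ τ ≤ r.2} := by
      refine ⟨?_, hqτ⟩
      rw [dist_comm]; exact infDist_le_dist_of_mem a.2
    have hdist : dist ((dist (a : X) p, infDist p A) : ℝ × ℝ)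
        (dist (a : X) q, infDist q A) < δF := by
      rw [Prod.dist_eq]
      have h1 : dist (dist (a : X) p) (dist (a : X) q) ≤ dist p q := by
        rw [Real.dist_eq]
        have := abs_dist_sub_le p q (a : X)
        rw [dist_comm p (a : X), dist_comm q (a : X)] at this
        exact this
      have h2 : dist (infDist p A) (infDist q A) ≤ dist p q := by
        rw [Real.dist_eq, abs_sub_le_iff]
        constructor
        · have := infDist_le_infDist_add_dist (x := p) (y := q) (s := A); linarith
        · have := infDist_le_infDist_add_dist (x := q) (y := p) (s := A)
          rw [dist_comm] at this; linarith
      have : max (dist (dist (a : X) p) (dist (a : X) q))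
          (dist (infDist p A) (infDist q A)) ≤ dist p q := max_le h1 h2
      linarith
    have hFF : |F (dist (a : X) p) (infDist p A) - F (dist (a : X) q) (infDist q A)| < c := by
      have := hFuδ _ hmem1 _ hmem2 hdist
      rwa [Real.dist_eq] at this
    have hψa0 : 0 ≤ ψ (a : X) := h0 a a.2
    have hψaM : ψ (a : X) ≤ M := hM a a.2
    have h1 : ψ (a : X) * F (dist (a : X) p) (infDist p A)
        ≤ ψ (a : X) * F (dist (a : X) q) (infDist q A) + M * c := by
      have := abs_lt.1 hFF
      nlinarith
    have h2 := le_omega hA hAc hFr h0 hM hq a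
    linarith
  intro p q hpτ hqτ hpq
  rw [abs_sub_le_iff]
  exact ⟨key p q hpτ hqτ hpq, key q p hqτ hpτ (by rwa [dist_comm])⟩

/-- Claim C: `Ω ψ` is uniformly continuous on `X` for `ψ` nonnegative, bounded and
uniformly continuous on `A`. -/
lemma claimC (hA : A.Nonempty) (hAc : IsClosed A)
    (hFr : ∀ s t : ℝ, t ≤ s → 0 < t → 0 < F s t ∧ F s t ≤ 1)
    (hF1 : Tendsto (fun t : ℝ => F t t) (nhdsWithin 0 (Set.Ioi 0)) (nhds 1))
    (hF0 : ∀ s : ℝ, 0 < s →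
      Tendsto (fun t : ℝ => F s t) (nhdsWithin 0 (Set.Ioi 0)) (nhds 0))
    (hFd : ∀ t : ℝ, 0 < t → AntitoneOn (fun s => F s t) (Set.Ici t))
    (hFu : ∀ τ : ℝ, 0 < τ → UniformContinuousOn (fun q : ℝ × ℝ => F q.1 q.2)
      {q : ℝ × ℝ | q.2 ≤ q.1 ∧ τ ≤ q.2})
    {ψ : X → ℝ} {M : ℝ} (h0 : ∀ a ∈ A, 0 ≤ ψ a) (hM : ∀ a ∈ A, ψ a ≤ M)
    (hUC : UniformContinuousOn ψ A) :
    UniformContinuous (omegaExt F A ψ) := by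
  rw [Metric.uniformContinuous_iff]
  intro ε hε
  obtain ⟨δ0, hδ0, hψδ⟩ := Metric.uniformContinuousOn_iff.1 hUC (ε / 6) (by linarith)
  obtain ⟨δa, hδa, hclA⟩ := claimA hA hAc hFr hF1 hF0 hFd hFu h0 hM hUC
    (show (0:ℝ) < ε / 6 by linarith)
  set δ1 := min δa (δ0 / 8) with hδ1_def
  have hδ1 : 0 < δ1 := lt_min hδa (by linarith)
  set τ := δ1 / 2 with hτ_def
  have hτ : 0 < τ := by positivity
  obtain ⟨η, hη, hclB⟩ := claimB hA hAc hFr hFu h0 hM (show (0:ℝ) < τ / 2 by linarith)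
    (show (0:ℝ) < ε / 2 by linarith)
  refine ⟨min η (min (τ / 2) (δ0 / 8)), by positivity, ?_⟩
  intro p q hpq
  rw [Real.dist_eq]
  have hpqη : dist p q ≤ η := le_of_lt (lt_of_lt_of_le hpq (min_le_left _ _))
  have hpqτ : dist p q ≤ τ / 2 :=
    le_of_lt (lt_of_lt_of_le hpq (le_trans (min_le_right _ _) (min_le_left _ _)))
  have hpqδ0 : dist p q ≤ δ0 / 8 :=
    le_of_lt (lt_of_lt_of_le hpq (le_trans (min_le_right _ _) (min_le_right _ _)))
  by_cases hcase : infDist p A ≤ τ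
  · -- both points are near A
    have hqA : infDist q A ≤ δ1 := by
      have h1 : infDist q A ≤ infDist p A + dist q p := infDist_le_infDist_add_dist
      rw [dist_comm] at h1
      have h2 : τ = δ1 / 2 := hτ_def
      linarith
    have hpA : infDist p A ≤ δ1 := le_trans hcase (by
      have h2 : τ = δ1 / 2 := hτ_def; linarith)
    -- choose near points
    have hnear : ∀ r : X, infDist r A ≤ δ1 → ∃ b ∈ A, dist b r ≤ 3 * infDist r A := by
      intro r hr
      by_cases hrA : r ∈ A
      · exact ⟨r, hrA, by simp [infDist_zero_of_mem hrA]⟩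
      · have ht : 0 < infDist r A := infDist_pos_of_notMem hA hAc hrA
        obtain ⟨b, hbA, hbr⟩ := (infDist_lt_iff hA).1
          (show infDist r A < 2 * infDist r A by linarith)
        exact ⟨b, hbA, by rw [dist_comm]; linarith⟩
    obtain ⟨bp, hbpA, hbp⟩ := hnear p hpA
    obtain ⟨bq, hbqA, hbq⟩ := hnear q hqA
    have h1 : |omegaExt F A ψ p - ψ bp| ≤ ε / 6 :=
      hclA p (le_trans hpA (min_le_left _ _)) bp hbpA hbp
    have h2 : |omegaExt F A ψ q - ψ bq| ≤ ε / 6 :=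
      hclA q (le_trans hqA (min_le_left _ _)) bq hbqA hbq
    have h3 : |ψ bp - ψ bq| < ε / 6 := by
      have hd : dist bp bq < δ0 := by
        have e1 : dist bp bq ≤ dist bp p + dist p q + dist q bq := dist_triangle4 _ _ _ _
        have e2 : dist q bq = dist bq q := dist_comm _ _
        have e3 : infDist p A ≤ δ1 := hpA
        have e4 : δ1 ≤ δ0 / 8 := min_le_right _ _
        have e5 : 3 * infDist p A ≤ 3 * δ1 := by linarith
        have e6 : 3 * infDist q A ≤ 3 * δ1 := by linarith
        have : dist bp bq ≤ 3 * δ1 + dist p q + 3 * δ1 := by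
          rw [e2] at e1; linarith
        linarith
      have := hψδ bp hbpA bq hbqA hd
      rwa [Real.dist_eq] at this
    have := abs_sub_le (omegaExt F A ψ p) (ψ bp) (omegaExt F A ψ q)
    have h4 : |omegaExt F A ψ p - omegaExt F A ψ q|
        ≤ |omegaExt F A ψ p - ψ bp| + |ψ bp - ψ bq| + |ψ bq - omegaExt F A ψ q| := by
      have e1 := abs_sub_le (omegaExt F A ψ p) (ψ bp) (ψ bq)
      have e2 := abs_sub_le (omegaExt F A ψ p) (ψ bq) (omegaExt F A ψ q)
      linarith
    have h2' : |ψ bq - omegaExt F A ψ q| ≤ ε / 6 := by rwa [abs_sub_comm]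
    linarith
  · -- both points are far from A
    push_neg at hcase
    have hqA : τ / 2 ≤ infDist q A := by
      have h1 : infDist p A ≤ infDist q A + dist p q := infDist_le_infDist_add_dist
      linarith
    have := hclB p q (by linarith) hqA hpqη
    linarith

end Aux

/-- For a Tietze extender `F`, the operator `Θ_F` is an extension operator which is
positively homogeneous, norm-preserving, `2`-Lipschitz, and preserves uniform
continuity. -/
theorem stmt_16 {X : Type*} [MetricSpace X] (A : Set X) (hA : A.Nonempty)
    (hAc : IsClosed A) (F : ℝ → ℝ → ℝ)
    (hFr : ∀ s t : ℝ, t ≤ s → 0 < t → 0 < F s t ∧ F s t ≤ 1)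
    (hF1 : Tendsto (fun t : ℝ => F t t) (nhdsWithin 0 (Set.Ioi 0)) (nhds 1))
    (hF0 : ∀ s : ℝ, 0 < s →
      Tendsto (fun t : ℝ => F s t) (nhdsWithin 0 (Set.Ioi 0)) (nhds 0))
    (hFd : ∀ t : ℝ, 0 < t → AntitoneOn (fun s => F s t) (Set.Ici t))
    (hFu : ∀ τ : ℝ, 0 < τ → UniformContinuousOn (fun q : ℝ × ℝ => F q.1 q.2)
      {q : ℝ × ℝ | q.2 ≤ q.1 ∧ τ ≤ q.2}) :
    (∀ φ : X → ℝ, (∃ C : ℝ, ∀ a ∈ A, |φ a| ≤ C) →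
      ∀ a ∈ A, thetaExt F A φ a = φ a) ∧
    (∀ φ : X → ℝ, (∃ C : ℝ, ∀ a ∈ A, |φ a| ≤ C) → ∀ lam : ℝ, 0 ≤ lam →
      ∀ x : X, thetaExt F A (fun a => lam * φ a) x = lam * thetaExt F A φ x) ∧
    (∀ φ : X → ℝ, (∃ C : ℝ, ∀ a ∈ A, |φ a| ≤ C) →
      (⨆ x : X, |thetaExt F A φ x|) = ⨆ a : A, |φ a|) ∧
    (∀ φ ψ : X → ℝ, (∃ C : ℝ, ∀ a ∈ A, |φ a| ≤ C) → (∃ C : ℝ, ∀ a ∈ A, |ψ a| ≤ C) →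
      (⨆ x : X, |thetaExt F A φ x - thetaExt F A ψ x|) ≤ 2 * ⨆ a : A, |φ a - ψ a|) ∧
    (∀ φ : X → ℝ, (∃ C : ℝ, ∀ a ∈ A, |φ a| ≤ C) → UniformContinuousOn φ A →
      UniformContinuous (thetaExt F A φ)) := by
  haveI : Nonempty A := hA.to_subtype
  haveI : Nonempty X := ⟨hA.choose⟩
  have hext : ∀ (φ : X → ℝ) (a : X), a ∈ A → thetaExt F A φ a = φ a := by
    intro φ a ha
    simp only [thetaExt, omegaExt_of_mem ha]
    exact max_zero_sub_max_neg_zero_eq_self (φ a)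
  refine ⟨fun φ _ a ha => hext φ a ha, ?_, ?_, ?_, ?_⟩
  · -- positive homogeneity
    intro φ _ lam hlam x
    have hpos : (fun a => max (lam * φ a) 0) = fun a => lam * max (φ a) 0 := by
      funext a
      rw [mul_max_of_nonneg _ _ hlam, mul_zero]
    have hneg : (fun a => max (-(lam * φ a)) 0) = fun a => lam * max (-φ a) 0 := by
      funext a
      rw [← mul_neg, mul_max_of_nonneg _ _ hlam, mul_zero]
    have homega : ∀ ψ : X → ℝ, omegaExt F A (fun a => lam * ψ a) x = lam * omegaExt F A ψ x := by
      intro ψ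
      by_cases hx : x ∈ A
      · rw [omegaExt_of_mem hx, omegaExt_of_mem hx]
      · rw [omegaExt_of_notMem hx, omegaExt_of_notMem hx,
          Real.mul_iSup_of_nonneg hlam]
        congr 1
        funext a
        ring
    simp only [thetaExt, hpos, hneg, homega]
    ring
  · -- norm preservation
    intro φ ⟨C, hC⟩
    set M := ⨆ a : A, |φ a| with hM_def
    have hbddA : BddAbove (Set.range fun a : A => |φ a|) := ⟨C, by
      rintro x ⟨a, rfl⟩; exact hC a a.2⟩
    have hMa : ∀ a ∈ A, |φ a| ≤ M := fun a ha => le_ciSup hbddA ⟨a, ha⟩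
    have hM0 : 0 ≤ M := le_trans (abs_nonneg _) (hMa hA.choose hA.choose_spec)
    have hposM : ∀ a ∈ A, max (φ a) 0 ≤ M := fun a ha =>
      max_le (le_trans (le_abs_self _) (hMa a ha)) hM0
    have hnegM : ∀ a ∈ A, max (-φ a) 0 ≤ M := fun a ha =>
      max_le (le_trans (neg_le_abs _) (hMa a ha)) hM0
    have hpos0 : ∀ a ∈ A, (0:ℝ) ≤ max (φ a) 0 := fun a _ => le_max_right _ _
    have hneg0 : ∀ a ∈ A, (0:ℝ) ≤ max (-φ a) 0 := fun a _ => le_max_right _ _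
    have hbound : ∀ x : X, |thetaExt F A φ x| ≤ M := by
      intro x
      have h1 := omega_nonneg hA hAc hFr hpos0 x
      have h2 := omega_le hA hAc hFr hpos0 hposM x
      have h3 := omega_nonneg hA hAc hFr hneg0 x
      have h4 := omega_le hA hAc hFr hneg0 hnegM x
      rw [thetaExt, abs_le]
      constructor <;> [linarith; linarith]
    refine le_antisymm (Real.iSup_le hbound hM0) ?_
    have hbddX : BddAbove (Set.range fun x : X => |thetaExt F A φ x|) := ⟨M, by
      rintro x ⟨y, rfl⟩; exact hbound y⟩
    refine ciSup_le fun a => ?_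
    have : |φ (a : X)| = |thetaExt F A φ (a : X)| := by rw [hext φ a a.2]
    rw [this]
    exact le_ciSup hbddX ((a : X))
  · -- 2-Lipschitz
    intro φ ψ ⟨Cφ, hCφ⟩ ⟨Cψ, hCψ⟩
    set D := ⨆ a : A, |φ a - ψ a| with hD_def
    have hbddD : BddAbove (Set.range fun a : A => |φ a - ψ a|) := ⟨Cφ + Cψ, by
      rintro x ⟨a, rfl⟩
      calc |φ a - ψ a| ≤ |φ a| + |ψ a| := abs_sub _ _
        _ ≤ Cφ + Cψ := add_le_add (hCφ a a.2) (hCψ a a.2)⟩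
    have hDa : ∀ a ∈ A, |φ a - ψ a| ≤ D := fun a ha => le_ciSup hbddD ⟨a, ha⟩
    have hD0 : 0 ≤ D := le_trans (abs_nonneg _) (hDa hA.choose hA.choose_spec)
    have hCφ0 : 0 ≤ Cφ := le_trans (abs_nonneg _) (hCφ hA.choose hA.choose_spec)
    have hCψ0 : 0 ≤ Cψ := le_trans (abs_nonneg _) (hCψ hA.choose hA.choose_spec)
    have hposφ0 : ∀ a ∈ A, (0:ℝ) ≤ max (φ a) 0 := fun a _ => le_max_right _ _
    have hnegφ0 : ∀ a ∈ A, (0:ℝ) ≤ max (-φ a) 0 := fun a _ => le_max_right _ _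
    have hposψ0 : ∀ a ∈ A, (0:ℝ) ≤ max (ψ a) 0 := fun a _ => le_max_right _ _
    have hnegψ0 : ∀ a ∈ A, (0:ℝ) ≤ max (-ψ a) 0 := fun a _ => le_max_right _ _
    have hposφM : ∀ a ∈ A, max (φ a) 0 ≤ Cφ := fun a ha =>
      max_le (le_trans (le_abs_self _) (hCφ a ha)) hCφ0
    have hnegφM : ∀ a ∈ A, max (-φ a) 0 ≤ Cφ := fun a ha =>
      max_le (le_trans (neg_le_abs _) (hCφ a ha)) hCφ0
    have hposψM : ∀ a ∈ A, max (ψ a) 0 ≤ Cψ := fun a ha =>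
      max_le (le_trans (le_abs_self _) (hCψ a ha)) hCψ0
    have hnegψM : ∀ a ∈ A, max (-ψ a) 0 ≤ Cψ := fun a ha =>
      max_le (le_trans (neg_le_abs _) (hCψ a ha)) hCψ0
    have hdiffpos : ∀ a ∈ A, max (φ a) 0 - max (ψ a) 0 ≤ D := fun a ha => by
      have h1 : |max (φ a) 0 - max (ψ a) 0| ≤ |φ a - ψ a| := abs_max_sub_max_le_abs _ _ _
      have := hDa a ha
      have := le_abs_self (max (φ a) 0 - max (ψ a) 0)
      linarith
    have hdiffpos' : ∀ a ∈ A, max (ψ a) 0 - max (φ a) 0 ≤ D := fun a ha => by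
      have h1 : |max (ψ a) 0 - max (φ a) 0| ≤ |ψ a - φ a| := abs_max_sub_max_le_abs _ _ _
      have h2 : |ψ a - φ a| = |φ a - ψ a| := abs_sub_comm _ _
      have := hDa a ha
      have := le_abs_self (max (ψ a) 0 - max (φ a) 0)
      linarith
    have hdiffneg : ∀ a ∈ A, max (-φ a) 0 - max (-ψ a) 0 ≤ D := fun a ha => by
      have h1 : |max (-φ a) 0 - max (-ψ a) 0| ≤ |(-φ a) - (-ψ a)| :=
        abs_max_sub_max_le_abs _ _ _
      have h2 : |(-φ a) - (-ψ a)| = |φ a - ψ a| := by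
        rw [show (-φ a) - (-ψ a) = ψ a - φ a by ring, abs_sub_comm]
      have := hDa a ha
      have := le_abs_self (max (-φ a) 0 - max (-ψ a) 0)
      linarith
    have hdiffneg' : ∀ a ∈ A, max (-ψ a) 0 - max (-φ a) 0 ≤ D := fun a ha => by
      have h1 : |max (-ψ a) 0 - max (-φ a) 0| ≤ |(-ψ a) - (-φ a)| :=
        abs_max_sub_max_le_abs _ _ _
      have h2 : |(-ψ a) - (-φ a)| = |φ a - ψ a| := by
        rw [show (-ψ a) - (-φ a) = φ a - ψ a by ring]
      have := hDa a ha
      have := le_abs_self (max (-ψ a) 0 - max (-φ a) 0)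
      linarith
    have hbound : ∀ x : X, |thetaExt F A φ x - thetaExt F A ψ x| ≤ 2 * D := by
      intro x
      have e1 := omega_sub_le hA hAc hFr hposφ0 hposψ0 hposψM hdiffpos hD0 x
      have e2 := omega_sub_le hA hAc hFr hposψ0 hposφ0 hposφM hdiffpos' hD0 x
      have e3 := omega_sub_le hA hAc hFr hnegφ0 hnegψ0 hnegψM hdiffneg hD0 x
      have e4 := omega_sub_le hA hAc hFr hnegψ0 hnegφ0 hnegφM hdiffneg' hD0 x
      simp only [thetaExt, abs_le]
      constructor <;> [linarith; linarith]
    exact Real.iSup_le hbound (by linarith)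
  · -- uniform continuity
    intro φ ⟨C, hC⟩ hUC
    have hC0 : 0 ≤ C := le_trans (abs_nonneg _) (hC hA.choose hA.choose_spec)
    have hmaxUC : UniformContinuous (fun x : ℝ => max x 0) :=
      (LipschitzWith.id.max_const 0).uniformContinuous
    have hposUC : UniformContinuousOn (fun a => max (φ a) 0) A := by
      rw [Metric.uniformContinuousOn_iff] at hUC ⊢
      intro ε hε
      obtain ⟨δ, hδ, h⟩ := hUC ε hε
      refine ⟨δ, hδ, fun x hx y hy hxy => ?_⟩
      have := h x hx y hy hxy
      rw [Real.dist_eq] at this ⊢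
      exact lt_of_le_of_lt (abs_max_sub_max_le_abs _ _ _) this
    have hnegUC : UniformContinuousOn (fun a => max (-φ a) 0) A := by
      rw [Metric.uniformContinuousOn_iff] at hUC ⊢
      intro ε hε
      obtain ⟨δ, hδ, h⟩ := hUC ε hε
      refine ⟨δ, hδ, fun x hx y hy hxy => ?_⟩
      have := h x hx y hy hxy
      rw [Real.dist_eq] at this ⊢
      refine lt_of_le_of_lt (le_trans (abs_max_sub_max_le_abs _ _ _) ?_) this
      rw [show -φ x - -φ y = -(φ x - φ y) by ring, abs_neg]
    have hpos0 : ∀ a ∈ A, (0:ℝ) ≤ max (φ a) 0 := fun a _ => le_max_right _ _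
    have hneg0 : ∀ a ∈ A, (0:ℝ) ≤ max (-φ a) 0 := fun a _ => le_max_right _ _
    have hposM : ∀ a ∈ A, max (φ a) 0 ≤ C := fun a ha =>
      max_le (le_trans (le_abs_self _) (hC a ha)) hC0
    have hnegM : ∀ a ∈ A, max (-φ a) 0 ≤ C := fun a ha =>
      max_le (le_trans (neg_le_abs _) (hC a ha)) hC0
    have u1 : UniformContinuous (omegaExt F A (fun a => max (φ a) 0)) :=
      claimC hA hAc hFr hF1 hF0 hFd hFu hpos0 hposM hposUC
    have u2 : UniformContinuous (omegaExt F A (fun a => max (-φ a) 0)) :=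
      claimC hA hAc hFr hF1 hF0 hFd hFu hneg0 hnegM hnegUC
    exact u1.sub u2
end

section
/- Let (X,d) be a metric space, A ⊆ X nonempty closed, ρ(x) = d(x,A), and for bounded φ : A → ℝ and x ∉ A define η_{x,φ}(t) = sup{φ(a) : a ∈ A, d(a,x) < t} for t > ρ(x), and η_{x,φ}(t) = inf φ for 0 < t ≤ ρ(x). Define Bohr's extension Φ[φ]|A = φ and Φ[φ](x) = (1/ρ(x)) ∫_{ρ(x)}^{2ρ(x)} η_{x,φ}(t) dt for x ∉ A. Then Φ is an isometry for the sup-norm: sup_X |Φ[φ] − Φ[ψ]| = sup_A |φ − ψ| for all bounded φ, ψ : A → ℝ; moreover Φ is isotone, positively homogeneous, and subadditive. -/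
open Metric Set MeasureTheory intervalIntegral
open scoped Classical

/-- Bohr's auxiliary function `η_{x,φ}`. -/
noncomputable def bohrEta {X : Type*} [MetricSpace X] (A : Set X) (φ : X → ℝ)
    (x : X) (t : ℝ) : ℝ :=
  if Metric.infDist x A < t then sSup (φ '' {a | a ∈ A ∧ dist a x < t})
  else sInf (φ '' A)

/-- Bohr's extension operator `Φ`. -/
noncomputable def bohrExt {X : Type*} [MetricSpace X] (A : Set X) (φ : X → ℝ) :
    X → ℝ := fun x =>
  if x ∈ A then φ x
  else (Metric.infDist x A)⁻¹ *
    ∫ t in (Metric.infDist x A)..(2 * Metric.infDist x A), bohrEta A φ x t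

section aux

variable {X : Type*} [MetricSpace X] {A : Set X} {φ ψ : X → ℝ} {x : X} {C D M : ℝ}

lemma bohr_bddAbove (hC : ∀ a ∈ A, |φ a| ≤ C) {s : Set X} (hs : s ⊆ A) :
    BddAbove (φ '' s) :=
  ⟨C, by rintro y ⟨a, ha, rfl⟩; exact (abs_le.1 (hC a (hs ha))).2⟩

lemma bohr_bddBelow (hC : ∀ a ∈ A, |φ a| ≤ C) {s : Set X} (hs : s ⊆ A) :
    BddBelow (φ '' s) :=
  ⟨-C, by rintro y ⟨a, ha, rfl⟩; exact (abs_le.1 (hC a (hs ha))).1⟩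

lemma bohr_S_nonempty (hA : A.Nonempty) {t : ℝ} (ht : Metric.infDist x A < t) :
    {a | a ∈ A ∧ dist a x < t}.Nonempty := by
  obtain ⟨y, hy, hyt⟩ := (Metric.infDist_lt_iff hA).1 ht
  exact ⟨y, hy, by rwa [dist_comm]⟩

lemma bohr_eta_mono (hA : A.Nonempty) (hC : ∀ a ∈ A, |φ a| ≤ C) :
    Monotone (bohrEta A φ x) := by
  intro t₁ t₂ h
  unfold bohrEta
  split_ifs with h1 h2 h2
  · refine csSup_le ((bohr_S_nonempty hA h1).image φ) ?_
    rintro y ⟨a, ⟨ha, hd⟩, rfl⟩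
    exact le_csSup (bohr_bddAbove hC fun z hz => hz.1)
      ⟨a, ⟨ha, lt_of_lt_of_le hd h⟩, rfl⟩
  · exact absurd (lt_of_lt_of_le h1 h) h2
  · obtain ⟨a, ha, hd⟩ := bohr_S_nonempty hA h2
    calc sInf (φ '' A) ≤ φ a := csInf_le (bohr_bddBelow hC le_rfl) ⟨a, ha, rfl⟩
    _ ≤ sSup (φ '' {a | a ∈ A ∧ dist a x < t₂}) :=
        le_csSup (bohr_bddAbove hC fun z hz => hz.1) ⟨a, ⟨ha, hd⟩, rfl⟩
  · exact le_rfl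

lemma bohr_eta_intable (hA : A.Nonempty) (hC : ∀ a ∈ A, |φ a| ≤ C) (a b : ℝ) :
    IntervalIntegrable (bohrEta A φ x) volume a b :=
  ((bohr_eta_mono hA hC).monotoneOn _).intervalIntegrable

lemma bohr_eta_sub_le (hA : A.Nonempty) (hC : ∀ a ∈ A, |φ a| ≤ C)
    (hD : ∀ a ∈ A, |ψ a| ≤ D) (hM : ∀ a ∈ A, φ a - ψ a ≤ M) (t : ℝ) :
    bohrEta A φ x t ≤ bohrEta A ψ x t + M := by
  unfold bohrEta
  split_ifs with h
  · refine csSup_le ((bohr_S_nonempty hA h).image φ) ?_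
    rintro y ⟨a, ha, rfl⟩
    have h1 : ψ a ≤ sSup (ψ '' {a | a ∈ A ∧ dist a x < t}) :=
      le_csSup (bohr_bddAbove hD fun z hz => hz.1) ⟨a, ha, rfl⟩
    have := hM a ha.1
    linarith
  · have : sInf (φ '' A) - M ≤ sInf (ψ '' A) := by
      refine le_csInf (hA.image ψ) ?_
      rintro y ⟨a, ha, rfl⟩
      have h1 : sInf (φ '' A) ≤ φ a := csInf_le (bohr_bddBelow hC le_rfl) ⟨a, ha, rfl⟩
      have := hM a ha
      linarith
    linarith

lemma bohr_key (hA : A.Nonempty) (hAc : IsClosed A) (hC : ∀ a ∈ A, |φ a| ≤ C)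
    (hD : ∀ a ∈ A, |ψ a| ≤ D) (hM : ∀ a ∈ A, |φ a - ψ a| ≤ M) (x : X) :
    |bohrExt A φ x - bohrExt A ψ x| ≤ M := by
  by_cases hx : x ∈ A
  · simpa [bohrExt, hx] using hM x hx
  · have hρ : 0 < Metric.infDist x A := (hAc.notMem_iff_infDist_pos hA).1 hx
    set ρ := Metric.infDist x A with hρdef
    have hsub : ∀ t : ℝ, |bohrEta A φ x t - bohrEta A ψ x t| ≤ M := by
      intro t
      rw [abs_le]
      constructor
      · have := bohr_eta_sub_le (x := x) hA hD hC (M := M)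
          (fun a ha => by have := (abs_le.1 (hM a ha)).1; linarith) t
        linarith
      · have := bohr_eta_sub_le (x := x) hA hC hD (M := M)
          (fun a ha => (abs_le.1 (hM a ha)).2) t
        linarith
    have hint : (∫ t in ρ..(2*ρ), bohrEta A φ x t) - ∫ t in ρ..(2*ρ), bohrEta A ψ x t
        = ∫ t in ρ..(2*ρ), (bohrEta A φ x t - bohrEta A ψ x t) :=
      (intervalIntegral.integral_sub (bohr_eta_intable hA hC _ _)
        (bohr_eta_intable hA hD _ _)).symm
    have hb : ‖∫ t in ρ..(2*ρ), (bohrEta A φ x t - bohrEta A ψ x t)‖ ≤ M * |2*ρ - ρ| :=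
      intervalIntegral.norm_integral_le_of_norm_le_const fun t _ => by
        rw [Real.norm_eq_abs]; exact hsub t
    rw [Real.norm_eq_abs] at hb
    simp only [bohrExt, if_neg hx, ← hρdef]
    rw [← mul_sub, abs_mul, abs_of_nonneg (inv_nonneg.2 hρ.le), hint]
    calc ρ⁻¹ * |∫ t in ρ..(2*ρ), (bohrEta A φ x t - bohrEta A ψ x t)|
        ≤ ρ⁻¹ * (M * |2*ρ - ρ|) := mul_le_mul_of_nonneg_left hb (inv_nonneg.2 hρ.le)
    _ = M := by
          have : |2*ρ - ρ| = ρ := by rw [abs_of_nonneg] <;> linarith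
          rw [this]; field_simp

lemma bohr_sSup_mul (c : ℝ) (hc : 0 ≤ c) (s : Set ℝ) (hs : s.Nonempty)
    (hb : BddAbove s) : sSup ((fun y => c * y) '' s) = c * sSup s := by
  rcases eq_or_lt_of_le hc with rfl | hc'
  · simp [Set.Nonempty.image_const hs, csSup_singleton]
  · refine IsLUB.csSup_eq ⟨?_, ?_⟩ (hs.image _)
    · rintro y ⟨a, ha, rfl⟩
      exact mul_le_mul_of_nonneg_left (le_csSup hb ha) hc
    · intro b hb'
      have : sSup s ≤ b / c := by
        refine csSup_le hs fun a ha => ?_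
        have := hb' ⟨a, ha, rfl⟩
        rwa [le_div_iff₀ hc', mul_comm]
      calc c * sSup s ≤ c * (b / c) := mul_le_mul_of_nonneg_left this hc
      _ = b := by field_simp

lemma bohr_sInf_mul (c : ℝ) (hc : 0 ≤ c) (s : Set ℝ) (hs : s.Nonempty)
    (hb : BddBelow s) : sInf ((fun y => c * y) '' s) = c * sInf s := by
  rcases eq_or_lt_of_le hc with rfl | hc'
  · simp only [zero_mul]
    refine le_antisymm (csInf_le ⟨0, by rintro y ⟨a, _, rfl⟩; simp⟩
      (by obtain ⟨a, ha⟩ := hs; exact ⟨a, ha, by simp⟩)) ?_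
    refine le_csInf (hs.image _) ?_
    rintro y ⟨a, _, rfl⟩; simp
  · refine IsGLB.csInf_eq ⟨?_, ?_⟩ (hs.image _)
    · rintro y ⟨a, ha, rfl⟩
      exact mul_le_mul_of_nonneg_left (csInf_le hb ha) hc
    · intro b hb'
      have : b / c ≤ sInf s := by
        refine le_csInf hs fun a ha => ?_
        have := hb' ⟨a, ha, rfl⟩
        rwa [div_le_iff₀ hc', mul_comm]
      calc b = c * (b / c) := by field_simp
      _ ≤ c * sInf s := mul_le_mul_of_nonneg_left this hc

end aux

/-- Bohr's extension operator is a sup-norm isometry, isotone, positively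
homogeneous and subadditive on bounded functions. -/
theorem stmt_18 {X : Type*} [MetricSpace X] (A : Set X) (hA : A.Nonempty)
    (hAc : IsClosed A) :
    (∀ φ ψ : X → ℝ, (∃ C : ℝ, ∀ a ∈ A, |φ a| ≤ C) → (∃ C : ℝ, ∀ a ∈ A, |ψ a| ≤ C) →
      (⨆ x : X, |bohrExt A φ x - bohrExt A ψ x|) = ⨆ a : A, |φ a - ψ a|) ∧
    (∀ φ ψ : X → ℝ, (∃ C : ℝ, ∀ a ∈ A, |φ a| ≤ C) → (∃ C : ℝ, ∀ a ∈ A, |ψ a| ≤ C) →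
      (∀ a ∈ A, φ a ≤ ψ a) → ∀ x : X, bohrExt A φ x ≤ bohrExt A ψ x) ∧
    (∀ φ : X → ℝ, (∃ C : ℝ, ∀ a ∈ A, |φ a| ≤ C) → ∀ lam : ℝ, 0 ≤ lam →
      ∀ x : X, bohrExt A (fun a => lam * φ a) x = lam * bohrExt A φ x) ∧
    (∀ φ ψ : X → ℝ, (∃ C : ℝ, ∀ a ∈ A, |φ a| ≤ C) → (∃ C : ℝ, ∀ a ∈ A, |ψ a| ≤ C) →
      ∀ x : X, bohrExt A (fun a => φ a + ψ a) x ≤ bohrExt A φ x + bohrExt A ψ x) := by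
  haveI : Nonempty A := hA.to_subtype
  haveI : Nonempty X := ⟨hA.choose⟩
  refine ⟨?_, ?_, ?_, ?_⟩
  · -- isometry
    rintro φ ψ ⟨C, hC⟩ ⟨D, hD⟩
    set M := ⨆ a : A, |φ a - ψ a| with hMdef
    have hbdd : BddAbove (Set.range fun a : A => |φ a - ψ a|) := by
      refine ⟨C + D, ?_⟩
      rintro y ⟨a, rfl⟩
      calc |φ a - ψ a| ≤ |φ a| + |ψ a| := abs_sub _ _
      _ ≤ C + D := add_le_add (hC a a.2) (hD a a.2)
    have hM : ∀ a ∈ A, |φ a - ψ a| ≤ M := fun a ha => le_ciSup hbdd ⟨a, ha⟩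
    have hkey := bohr_key hA hAc hC hD hM
    refine le_antisymm (ciSup_le hkey) ?_
    refine ciSup_le fun a => ?_
    have ha : (a : X) ∈ A := a.2
    have : |φ a - ψ a| = |bohrExt A φ a - bohrExt A ψ a| := by
      simp [bohrExt, ha]
    rw [this]
    exact le_ciSup ⟨M, by rintro y ⟨x, rfl⟩; exact hkey x⟩ (a : X)
  · -- isotone
    rintro φ ψ ⟨C, hC⟩ ⟨D, hD⟩ hle x
    by_cases hx : x ∈ A
    · simpa [bohrExt, hx] using hle x hx
    · simp only [bohrExt, if_neg hx]
      have hρ : 0 < Metric.infDist x A := (hAc.notMem_iff_infDist_pos hA).1 hx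
      refine mul_le_mul_of_nonneg_left ?_ (inv_nonneg.2 hρ.le)
      refine intervalIntegral.integral_mono_on (by linarith)
        (bohr_eta_intable hA hC _ _) (bohr_eta_intable hA hD _ _) fun t _ => ?_
      unfold bohrEta
      split_ifs with h
      · refine csSup_le ((bohr_S_nonempty hA h).image φ) ?_
        rintro y ⟨a, ha, rfl⟩
        exact (hle a ha.1).trans (le_csSup (bohr_bddAbove hD fun z hz => hz.1) ⟨a, ha, rfl⟩)
      · refine le_csInf (hA.image ψ) ?_
        rintro y ⟨a, ha, rfl⟩
        exact (csInf_le (bohr_bddBelow hC le_rfl) ⟨a, ha, rfl⟩).trans (hle a ha)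
  · -- homogeneous
    rintro φ ⟨C, hC⟩ lam hlam x
    have heta : ∀ t, bohrEta A (fun a => lam * φ a) x t = lam * bohrEta A φ x t := by
      intro t
      unfold bohrEta
      split_ifs with h
      · rw [show (fun a => lam * φ a) '' {a | a ∈ A ∧ dist a x < t}
            = (fun y => lam * y) '' (φ '' {a | a ∈ A ∧ dist a x < t}) by
          rw [Set.image_image]]
        exact bohr_sSup_mul lam hlam _ ((bohr_S_nonempty hA h).image φ)
          (bohr_bddAbove hC fun z hz => hz.1)
      · rw [show (fun a => lam * φ a) '' A = (fun y => lam * y) '' (φ '' A) by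
          rw [Set.image_image]]
        exact bohr_sInf_mul lam hlam _ (hA.image φ) (bohr_bddBelow hC le_rfl)
    by_cases hx : x ∈ A
    · simp [bohrExt, hx]
    · simp only [bohrExt, if_neg hx]
      rw [show (∫ t in (Metric.infDist x A)..(2 * Metric.infDist x A),
          bohrEta A (fun a => lam * φ a) x t)
        = ∫ t in (Metric.infDist x A)..(2 * Metric.infDist x A),
          lam * bohrEta A φ x t from intervalIntegral.integral_congr fun t _ => heta t]
      rw [intervalIntegral.integral_const_mul]
      ring
  · -- subadditive
    rintro φ ψ ⟨C, hC⟩ ⟨D, hD⟩ x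
    by_cases hx : x ∈ A
    · simp [bohrExt, hx]
    · simp only [bohrExt, if_neg hx]
      have hρ : 0 < Metric.infDist x A := (hAc.notMem_iff_infDist_pos hA).1 hx
      set ρ := Metric.infDist x A with hρdef
      have hCD : ∀ a ∈ A, |φ a + ψ a| ≤ C + D := fun a ha =>
        (abs_add_le _ _).trans (add_le_add (hC a ha) (hD a ha))
      have hle : ρ ≤ 2 * ρ := by linarith
      have h1 : IntegrableOn (bohrEta A φ x) (Ioc ρ (2*ρ)) volume :=
        (bohr_eta_intable hA hC ρ (2*ρ)).1
      have h2 : IntegrableOn (bohrEta A ψ x) (Ioc ρ (2*ρ)) volume :=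
        (bohr_eta_intable hA hD ρ (2*ρ)).1
      have h3 : IntegrableOn (bohrEta A (fun a => φ a + ψ a) x) (Ioc ρ (2*ρ)) volume :=
        (bohr_eta_intable hA hCD ρ (2*ρ)).1
      have hpt : ∀ t ∈ Ioc ρ (2*ρ),
          bohrEta A (fun a => φ a + ψ a) x t ≤ bohrEta A φ x t + bohrEta A ψ x t := by
        intro t ht
        have h : ρ < t := ht.1
        unfold bohrEta
        rw [if_pos h, if_pos h, if_pos h]
        refine csSup_le ((bohr_S_nonempty hA h).image _) ?_
        rintro y ⟨a, ha, rfl⟩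
        exact add_le_add (le_csSup (bohr_bddAbove hC fun z hz => hz.1) ⟨a, ha, rfl⟩)
          (le_csSup (bohr_bddAbove hD fun z hz => hz.1) ⟨a, ha, rfl⟩)
      rw [intervalIntegral.integral_of_le hle, intervalIntegral.integral_of_le hle,
        intervalIntegral.integral_of_le hle]
      have hmono : (∫ t in Ioc ρ (2*ρ), bohrEta A (fun a => φ a + ψ a) x t)
          ≤ ∫ t in Ioc ρ (2*ρ), (bohrEta A φ x t + bohrEta A ψ x t) :=
        setIntegral_mono_on h3 (h1.add h2) measurableSet_Ioc hpt
      rw [integral_add h1 h2] at hmono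
      calc ρ⁻¹ * ∫ t in Ioc ρ (2*ρ), bohrEta A (fun a => φ a + ψ a) x t
          ≤ ρ⁻¹ * ((∫ t in Ioc ρ (2*ρ), bohrEta A φ x t)
            + ∫ t in Ioc ρ (2*ρ), bohrEta A ψ x t) :=
            mul_le_mul_of_nonneg_left hmono (inv_nonneg.2 hρ.le)
      _ = _ := by ring
end

section
/- Let (X,d) be a metric space, A ⊆ X nonempty closed, ρ(x) = d(x,A), and φ : A → ℝ bounded and uniformly continuous. Define η_x(t) = sup{φ(a) : a ∈ A, d(a,x) < t} for t > ρ(x) and η_x(t) = inf φ for 0 < t ≤ ρ(x), and Bohr's extension f(x) = (1/ρ(x)) ∫_{ρ(x)}^{2ρ(x)} η_x(t) dt for x ∉ A, f|A = φ. Then f is uniformly continuous on X; moreover, for each τ > 0 the restriction of f to {x : d(x,A) ≥ τ} is (4·(sup φ − inf φ)/τ)-Lipschitz when φ has values in an interval of length sup φ − inf φ (in particular (4/τ)-Lipschitz when φ takes values in [0,1]). -/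
open Metric Set MeasureTheory intervalIntegral
open scoped Classical

/-!
Write `m`, `M` for the infimum and supremum of `φ` on `A`. Each `η_x` is monotone with values
in `[m, M]`, and `η_x t ≤ η_p (t + d(x,p))`. Substituting `t = ρ(x) s` gives
`f x = ∫_1^2 η_x(ρ(x) s) ds`, and since `ρ(x) s + d(x,p) ≤ ρ(p) s + 3 d(x,p)` for
`1 ≤ s ≤ 2`, `f x - f p` is at most `ρ(p)⁻¹` times the change of `∫ η_p` over `[ρ(p), 2ρ(p)]`
under a shift by `3 d(x,p)`, hence at most `3 (M - m) d(x,p) / ρ(p)`. This is the Lipschitz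
bound away from `A`.

Near `A`, every `η_x t` with `ρ(x) < t ≤ 2ρ(x)` is a supremum of `φ` over points of `A` within
`4ρ(x)` of a fixed `a ∈ A` with `d(x,a) < 2ρ(x)`, so the average `f x` is within the modulus of
continuity of `φ` of `φ a`. Together the two estimates give uniform continuity.
-/

lemma intervalIntegral_shift_sub_le {η : ℝ → ℝ} (hη : ∀ a b, IntervalIntegrable η volume a b)
    {m M : ℝ} (hm : ∀ t, m ≤ η t) (hM : ∀ t, η t ≤ M) (a b : ℝ) {c : ℝ} (hc : 0 ≤ c) :
    (∫ t in (a + c)..(b + c), η t) - ∫ t in a..b, η t ≤ c * (M - m) := by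
  rw [integral_interval_sub_interval_comm (hη _ _) (hη _ _) (hη _ _),
    integral_symm a (a + c), integral_symm b (b + c)]
  have hupper : ∫ t in b..(b + c), η t ≤ c * M := by
    simpa [mul_comm] using integral_mono_on (by linarith : b ≤ b + c) (hη _ _)
      intervalIntegrable_const fun t _ => hM t
  have hlower : c * m ≤ ∫ t in a..(a + c), η t := by
    simpa [mul_comm] using integral_mono_on (by linarith : a ≤ a + c) intervalIntegrable_const
      (hη _ _) fun t _ => hm t
  linarith

lemma abs_inv_mul_integral_sub_le {g : ℝ → ℝ} {a b y ε : ℝ} (hab : a < b)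
    (hg : IntervalIntegrable g volume a b) (h : ∀ t ∈ Ioc a b, |g t - y| ≤ ε) :
    |(b - a)⁻¹ * (∫ t in a..b, g t) - y| ≤ ε := by
  have hba : 0 < b - a := sub_pos.2 hab
  have key := intervalIntegral.norm_integral_le_of_norm_le_const (f := fun t => g t - y)
    fun t ht => h t (by rwa [uIoc_of_le hab.le] at ht)
  rw [integral_sub hg intervalIntegrable_const, intervalIntegral.integral_const, smul_eq_mul,
    Real.norm_eq_abs, abs_of_pos hba] at key
  have hrw : (b - a)⁻¹ * (∫ t in a..b, g t) - y =
      (b - a)⁻¹ * ((∫ t in a..b, g t) - (b - a) * y) := by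
    field_simp
  rw [hrw, abs_mul, abs_of_pos (inv_pos.2 hba), inv_mul_le_iff₀ hba]
  linarith

section Bohr

variable {X : Type*} [MetricSpace X] {A : Set X} {φ : X → ℝ}

lemma bohrEta_mem_Icc (hA : A.Nonempty) (hb : BddAbove (φ '' A)) (hbl : BddBelow (φ '' A))
    (x : X) (t : ℝ) : bohrEta A φ x t ∈ Icc (sInf (φ '' A)) (sSup (φ '' A)) := by
  have hsub : φ '' {a | a ∈ A ∧ dist a x < t} ⊆ φ '' A := image_mono fun _ hb => hb.1
  rw [bohrEta]
  split_ifs with ht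
  · obtain ⟨a, ha, hxa⟩ := (infDist_lt_iff hA).1 ht
    have hmem : φ a ∈ φ '' {a | a ∈ A ∧ dist a x < t} :=
      mem_image_of_mem φ ⟨ha, by rwa [dist_comm]⟩
    exact ⟨(csInf_le hbl (mem_image_of_mem φ ha)).trans (le_csSup (hb.mono hsub) hmem),
      csSup_le_csSup hb ⟨_, hmem⟩ hsub⟩
  · exact ⟨le_rfl, csInf_le_csSup (hA.image φ) hbl hb⟩

lemma bohrEta_le_bohrEta (hA : A.Nonempty) (hb : BddAbove (φ '' A)) (hbl : BddBelow (φ '' A))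
    {x p : X} {t s : ℝ} (h : ∀ a ∈ A, dist a x < t → dist a p < s) :
    bohrEta A φ x t ≤ bohrEta A φ p s := by
  by_cases ht : infDist x A < t
  · obtain ⟨a, ha, hxa⟩ := (infDist_lt_iff hA).1 ht
    have hax : dist a x < t := by rwa [dist_comm]
    have hs : infDist p A < s :=
      (infDist_lt_iff hA).2 ⟨a, ha, by rw [dist_comm]; exact h a ha hax⟩
    rw [bohrEta, bohrEta, if_pos ht, if_pos hs]
    exact csSup_le_csSup (hb.mono (image_mono fun _ hb => hb.1))
      ⟨φ a, mem_image_of_mem φ ⟨ha, hax⟩⟩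
      (image_mono fun b hb => ⟨hb.1, h b hb.1 hb.2⟩)
  · rw [bohrEta, if_neg ht]
    exact (bohrEta_mem_Icc hA hb hbl p s).1

lemma bohrEta_mono (hA : A.Nonempty) (hb : BddAbove (φ '' A)) (hbl : BddBelow (φ '' A))
    (x : X) : Monotone (bohrEta A φ x) :=
  fun _ _ hts => bohrEta_le_bohrEta hA hb hbl fun _ _ h => h.trans_le hts

lemma abs_bohrEta_sub_le (hA : A.Nonempty) {x : X} {t y ε : ℝ} (ht : infDist x A < t)
    (hφ : ∀ b ∈ A, dist b x < t → |φ b - y| ≤ ε) : |bohrEta A φ x t - y| ≤ ε := by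
  obtain ⟨b₀, hb₀, hxb₀⟩ := (infDist_lt_iff hA).1 ht
  have hb₀t : b₀ ∈ {a | a ∈ A ∧ dist a x < t} := ⟨hb₀, by rwa [dist_comm]⟩
  have hbdd : BddAbove (φ '' {a | a ∈ A ∧ dist a x < t}) :=
    ⟨y + ε, forall_mem_image.2 fun b hb => by linarith [(abs_le.1 (hφ b hb.1 hb.2)).2]⟩
  rw [bohrEta, if_pos ht, abs_le]
  constructor
  · have := (abs_le.1 (hφ b₀ hb₀t.1 hb₀t.2)).1
    linarith [le_csSup hbdd (mem_image_of_mem φ hb₀t)]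
  · have := csSup_le (nonempty_of_mem (mem_image_of_mem φ hb₀t))
      (forall_mem_image.2 fun b hb =>
      (by linarith [(abs_le.1 (hφ b hb.1 hb.2)).2] : φ b ≤ y + ε))
    linarith

lemma bohrExt_eq_integral_comp_mul {x : X} (hx : 0 < infDist x A) :
    bohrExt A φ x = ∫ s in (1 : ℝ)..2, bohrEta A φ x (infDist x A * s) := by
  have hxA : x ∉ A := fun h => hx.ne' (infDist_zero_of_mem h)
  rw [bohrExt, if_neg hxA, integral_comp_mul_left _ hx.ne', smul_eq_mul, mul_one,
    mul_comm _ (2 : ℝ)]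

lemma bohrExt_sub_le (hA : A.Nonempty) (hb : BddAbove (φ '' A)) (hbl : BddBelow (φ '' A))
    {x p : X} (hx : 0 < infDist x A) (hp : 0 < infDist p A) :
    bohrExt A φ x - bohrExt A φ p ≤
      3 * (sSup (φ '' A) - sInf (φ '' A)) * dist x p / infDist p A := by
  set ρ := infDist p A
  set d := dist x p
  have hd : 0 ≤ d := dist_nonneg
  have hρx : infDist x A ≤ ρ + d := infDist_le_infDist_add_dist
  have hmono := bohrEta_mono hA hb hbl p
  have hcompare : ∫ s in (1 : ℝ)..2, bohrEta A φ x (infDist x A * s) ≤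
      ∫ s in (1 : ℝ)..2, bohrEta A φ p (ρ * s + 3 * d) := by
    refine integral_mono_on (by norm_num)
      ((bohrEta_mono hA hb hbl x).comp (monotone_id.const_mul hx.le)).intervalIntegrable
      (hmono.comp ((monotone_id.const_mul hp.le).add_const _)).intervalIntegrable
      fun s hs => bohrEta_le_bohrEta hA hb hbl fun a _ hax => ?_
    have := dist_triangle a x p
    nlinarith [hs.1, hs.2]
  have hshift := intervalIntegral_shift_sub_le (fun _ _ => hmono.intervalIntegrable)
    (fun t => (bohrEta_mem_Icc hA hb hbl p t).1) (fun t => (bohrEta_mem_Icc hA hb hbl p t).2)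
    (ρ * 1) (ρ * 2) (by positivity : 0 ≤ 3 * d)
  rw [bohrExt_eq_integral_comp_mul hx, bohrExt_eq_integral_comp_mul hp]
  calc (∫ s in (1 : ℝ)..2, bohrEta A φ x (infDist x A * s)) -
        ∫ s in (1 : ℝ)..2, bohrEta A φ p (ρ * s)
      ≤ (∫ s in (1 : ℝ)..2, bohrEta A φ p (ρ * s + 3 * d)) -
        ∫ s in (1 : ℝ)..2, bohrEta A φ p (ρ * s) := sub_le_sub_right hcompare _
    _ = ρ⁻¹ * ((∫ t in (ρ * 1 + 3 * d)..(ρ * 2 + 3 * d), bohrEta A φ p t) -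
        ∫ t in (ρ * 1)..(ρ * 2), bohrEta A φ p t) := by
      rw [integral_comp_mul_add _ hp.ne', integral_comp_mul_left _ hp.ne', smul_eq_mul,
        smul_eq_mul, mul_sub]
    _ ≤ ρ⁻¹ * (3 * d * (sSup (φ '' A) - sInf (φ '' A))) :=
      mul_le_mul_of_nonneg_left hshift (by positivity)
    _ = 3 * (sSup (φ '' A) - sInf (φ '' A)) * d / ρ := by field_simp

lemma abs_bohrExt_sub_le_of_le_infDist (hA : A.Nonempty) (hb : BddAbove (φ '' A))
    (hbl : BddBelow (φ '' A)) {τ : ℝ} (hτ : 0 < τ) {x p : X} (hx : τ ≤ infDist x A)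
    (hp : τ ≤ infDist p A) :
    |bohrExt A φ x - bohrExt A φ p| ≤
      3 * (sSup (φ '' A) - sInf (φ '' A)) * dist x p / τ := by
  have hK : 0 ≤ 3 * (sSup (φ '' A) - sInf (φ '' A)) * dist x p := by
    have := csInf_le_csSup (hA.image φ) hbl hb
    have := dist_nonneg (x := x) (y := p)
    positivity
  rw [abs_sub_le_iff]
  constructor
  · exact (bohrExt_sub_le hA hb hbl (hτ.trans_le hx) (hτ.trans_le hp)).trans
      (div_le_div_of_nonneg_left hK hτ hp)
  · rw [dist_comm]
    exact (bohrExt_sub_le hA hb hbl (hτ.trans_le hp) (hτ.trans_le hx)).trans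
      (div_le_div_of_nonneg_left (by rwa [dist_comm]) hτ hx)

lemma abs_bohrExt_sub_le_of_dist_lt (hA : A.Nonempty) (hb : BddAbove (φ '' A))
    (hbl : BddBelow (φ '' A)) {x a : X} {ε : ℝ} (hx : x ∉ A)
    (hxa : dist x a < 2 * infDist x A)
    (hφ : ∀ b ∈ A, dist b a < 4 * infDist x A → |φ b - φ a| ≤ ε) :
    |bohrExt A φ x - φ a| ≤ ε := by
  set ρ := infDist x A
  have hρ : 0 < ρ := by linarith [dist_nonneg (x := x) (y := a)]
  have key := abs_inv_mul_integral_sub_le (by linarith : ρ < 2 * ρ)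
    (bohrEta_mono hA hb hbl x).intervalIntegrable fun t ht =>
      abs_bohrEta_sub_le hA ht.1 fun b hb hbx => hφ b hb (by
        linarith [dist_triangle b x a, ht.2])
  rw [bohrExt, if_neg hx]
  rwa [show 2 * ρ - ρ = ρ by ring] at key

lemma exists_mem_abs_bohrExt_sub_le (hA : A.Nonempty) (hAc : IsClosed A)
    (hb : BddAbove (φ '' A)) (hbl : BddBelow (φ '' A)) {x : X} {r ε : ℝ}
    (hx : infDist x A < r)
    (hφ : ∀ a ∈ A, ∀ b ∈ A, dist b a < 4 * r → |φ b - φ a| ≤ ε) :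
    ∃ a ∈ A, dist x a < 2 * r ∧ |bohrExt A φ x - φ a| ≤ ε := by
  have hr : 0 < r := infDist_nonneg.trans_lt hx
  by_cases hxA : x ∈ A
  · refine ⟨x, hxA, by simpa using hr, ?_⟩
    simpa [bohrExt, hxA] using hφ x hxA x hxA (by simpa using hr)
  · have hρ : 0 < infDist x A := (hAc.notMem_iff_infDist_pos hA).1 hxA
    obtain ⟨a, ha, hxa⟩ := (infDist_lt_iff hA).1 (by linarith : infDist x A < 2 * infDist x A)
    exact ⟨a, ha, by linarith, abs_bohrExt_sub_le_of_dist_lt hA hb hbl hxA hxa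
      fun b hb hba => hφ a ha b hb (by linarith)⟩

lemma uniformContinuous_bohrExt (hA : A.Nonempty) (hAc : IsClosed A)
    (hb : BddAbove (φ '' A)) (hbl : BddBelow (φ '' A)) (hφ : UniformContinuousOn φ A) :
    UniformContinuous (bohrExt A φ) := by
  rw [Metric.uniformContinuous_iff]
  intro ε hε
  obtain ⟨δ, hδ, hφδ⟩ := Metric.uniformContinuousOn_iff.1 hφ (ε / 4) (by positivity)
  have hmod : ∀ a ∈ A, ∀ b ∈ A, dist b a < δ → |φ b - φ a| ≤ ε / 4 :=
    fun a ha b hb h => (hφδ b hb a ha h).le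
  set K := 3 * (sSup (φ '' A) - sInf (φ '' A))
  have hK : 0 ≤ K := by have := csInf_le_csSup (hA.image φ) hbl hb; positivity
  set r := δ / 12 with hrδ
  have hr : 0 < r := by positivity
  refine ⟨min r (ε * r / (K + 1)), by positivity, fun {u v} huv => ?_⟩
  have hur : dist u v < r := huv.trans_le (min_le_left _ _)
  rw [Real.dist_eq]
  by_cases hfar : r ≤ infDist u A ∧ r ≤ infDist v A
  · have hsmall : dist u v * (K + 1) < ε * r :=
      (lt_div_iff₀ (by positivity)).1 (huv.trans_le (min_le_right _ _))
    calc |bohrExt A φ u - bohrExt A φ v| ≤ K * dist u v / r :=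
          abs_bohrExt_sub_le_of_le_infDist hA hb hbl hr hfar.1 hfar.2
      _ < ε := by rw [div_lt_iff₀ hr]; nlinarith [dist_nonneg (x := u) (y := v)]
  · have huv' : infDist u A ≤ infDist v A + dist u v := infDist_le_infDist_add_dist
    have hvu' : infDist v A ≤ infDist u A + dist u v := by
      rw [dist_comm]; exact infDist_le_infDist_add_dist
    have hnear : infDist u A < 2 * r ∧ infDist v A < 2 * r := by
      rw [not_and_or, not_le, not_le] at hfar
      constructor <;> rcases hfar with h | h <;> linarith
    have hmod' : ∀ a ∈ A, ∀ b ∈ A, dist b a < 4 * (2 * r) → |φ b - φ a| ≤ ε / 4 :=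
      fun a ha b hb h => hmod a ha b hb (by linarith)
    obtain ⟨a, ha, hua, hfa⟩ := exists_mem_abs_bohrExt_sub_le hA hAc hb hbl hnear.1 hmod'
    obtain ⟨c, hc, hvc, hfc⟩ := exists_mem_abs_bohrExt_sub_le hA hAc hb hbl hnear.2 hmod'
    have hac : |φ a - φ c| ≤ ε / 4 := hmod c hc a ha (by
      linarith [dist_triangle4 a u v c, dist_comm a u])
    calc |bohrExt A φ u - bohrExt A φ v|
        ≤ |bohrExt A φ u - φ a| + |φ a - bohrExt A φ v| := abs_sub_le _ _ _
      _ ≤ |bohrExt A φ u - φ a| + (|φ a - φ c| + |φ c - bohrExt A φ v|) := by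
          gcongr; exact abs_sub_le _ _ _
      _ < ε := by rw [abs_sub_comm (φ c)]; linarith

end Bohr

/-- Bohr's extension of a bounded uniformly continuous function is uniformly
continuous; moreover it is `(4(sup φ − inf φ)/τ)`-Lipschitz on the set of points at
distance at least `τ` from `A`. -/
theorem stmt_19 {X : Type*} [MetricSpace X] (A : Set X) (hA : A.Nonempty)
    (hAc : IsClosed A) (φ : X → ℝ)
    (hφb : ∃ C : ℝ, ∀ a ∈ A, |φ a| ≤ C) (hφu : UniformContinuousOn φ A) :
    UniformContinuous (bohrExt A φ) ∧
    ∀ τ : ℝ, 0 < τ → ∀ x p : X,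
      τ ≤ Metric.infDist x A → τ ≤ Metric.infDist p A →
      |bohrExt A φ x - bohrExt A φ p| ≤
        4 * ((⨆ a : A, φ a) - ⨅ a : A, φ a) / τ * dist x p := by
  obtain ⟨C, hC⟩ := hφb
  have hb : BddAbove (φ '' A) := ⟨C, forall_mem_image.2 fun a ha => (abs_le.1 (hC a ha)).2⟩
  have hbl : BddBelow (φ '' A) := ⟨-C, forall_mem_image.2 fun a ha => (abs_le.1 (hC a ha)).1⟩
  refine ⟨uniformContinuous_bohrExt hA hAc hb hbl hφu, fun τ hτ x p hx hp => ?_⟩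
  have hmM := csInf_le_csSup (hA.image φ) hbl hb
  rw [← sSup_image', ← sInf_image', div_mul_eq_mul_div]
  calc |bohrExt A φ x - bohrExt A φ p|
      ≤ 3 * (sSup (φ '' A) - sInf (φ '' A)) * dist x p / τ :=
        abs_bohrExt_sub_le_of_le_infDist hA hb hbl hτ hx hp
    _ ≤ 4 * (sSup (φ '' A) - sInf (φ '' A)) * dist x p / τ := by
        gcongr
        norm_num
end
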